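/- arXiv:2101.05966 — 8 statements merged into one kernel-verified Lean document; each statement's English description precedes it below -/
import Mathlib

section
/- Let M : ℝ → M₂(ℝ) be twice differentiable on a neighborhood of E* with det M(E) = 1 for all E in that neighborhood and M(E*) = I, and set D(E) = tr M(E). Then D'(E*) = 0 and det M'(E*) = −D''(E*)/2. Moreover, if D''(E*) < 0 and we set β = √(−D''(E*)/2), then there exist linearly independent vectors v₁, v₂ ∈ ℝ² such that M'(E*)·v₁ = −β·v₂ and M'(E*)·v₂ = β·v₁; in particular the characteristic polynomial of M'(E*) is λ² + β², so M'(E*) has eigenvalues ±i·β. -/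
open Matrix

set_option maxHeartbeats 1600000 in
/-- At a point `E*` where the (determinant-one) matrix family satisfies
`M(E*) = I`, the discriminant `D = tr M` has vanishing derivative,
`det M'(E*) = −D''(E*)/2`, and if `D''(E*) < 0` then with
`β = √(−D''(E*)/2)` there exist linearly independent `v₁, v₂` with
`M'(E*)v₁ = −β v₂`, `M'(E*)v₂ = β v₁`; in particular the characteristic
polynomial of `M'(E*)` is `λ² + β²` with roots `± i β`. -/
theorem dirac_point_monodromy_derivative
    (Estar : ℝ) (U : Set ℝ) (hU : U ∈ nhds Estar)
    (M M' M'' : ℝ → Matrix (Fin 2) (Fin 2) ℝ)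
    (hM1 : ∀ E ∈ U, ∀ i j, HasDerivAt (fun t => M t i j) (M' E i j) E)
    (hM2 : ∀ E ∈ U, ∀ i j, HasDerivAt (fun t => M' t i j) (M'' E i j) E)
    (hdet : ∀ E ∈ U, (M E).det = 1)
    (hI : M Estar = 1) :
    HasDerivAt (fun t => (M t).trace) 0 Estar ∧
    (M' Estar).det = -(M'' Estar).trace / 2 ∧
    ((M'' Estar).trace < 0 →
      ∀ β : ℝ, β = Real.sqrt (-(M'' Estar).trace / 2) →
        (∃ v₁ v₂ : Fin 2 → ℝ, LinearIndependent ℝ ![v₁, v₂] ∧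
          (M' Estar).mulVec v₁ = (-β) • v₂ ∧
          (M' Estar).mulVec v₂ = β • v₁) ∧
        (∀ z : ℂ, z ^ 2 - ((M' Estar).trace : ℂ) * z + ((M' Estar).det : ℂ)
            = z ^ 2 + (β : ℂ) ^ 2) ∧
        ((Complex.I * β) ^ 2 - ((M' Estar).trace : ℂ) * (Complex.I * β)
            + ((M' Estar).det : ℂ) = 0) ∧
        ((-(Complex.I * β)) ^ 2 - ((M' Estar).trace : ℂ) * (-(Complex.I * β))
            + ((M' Estar).det : ℂ) = 0)) := by
  have hEU : Estar ∈ U := mem_of_mem_nhds hU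
  have hEint : Estar ∈ interior U := mem_interior_iff_mem_nhds.mpr hU
  -- the determinant function and its derivative
  set f : ℝ → ℝ := fun t => M t 0 0 * M t 1 1 - M t 0 1 * M t 1 0 with hf
  set f1 : ℝ → ℝ := fun t =>
    M' t 0 0 * M t 1 1 + M t 0 0 * M' t 1 1
      - (M' t 0 1 * M t 1 0 + M t 0 1 * M' t 1 0) with hf1
  have hderiv1 : ∀ t ∈ U, HasDerivAt f (f1 t) t := by
    intro t ht
    exact ((hM1 t ht 0 0).mul (hM1 t ht 1 1)).sub
      ((hM1 t ht 0 1).mul (hM1 t ht 1 0))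
  have hfone : ∀ t ∈ U, f t = 1 := by
    intro t ht
    have := hdet t ht
    rwa [Matrix.det_fin_two] at this
  have hf1zero : ∀ t ∈ interior U, f1 t = 0 := by
    intro t ht
    have hmem : interior U ∈ nhds t := isOpen_interior.mem_nhds ht
    have hconst : f =ᶠ[nhds t] fun _ => (1 : ℝ) := by
      filter_upwards [hmem] with s hs
      exact hfone s (interior_subset hs)
    have h0 : HasDerivAt f 0 t :=
      (hasDerivAt_const t (1 : ℝ)).congr_of_eventuallyEq hconst
    exact (hderiv1 t (interior_subset ht)).unique h0
  -- second derivative of det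
  have hderiv2 : HasDerivAt f1
      (M'' Estar 0 0 * M Estar 1 1 + M' Estar 0 0 * M' Estar 1 1
        + (M' Estar 0 0 * M' Estar 1 1 + M Estar 0 0 * M'' Estar 1 1)
        - (M'' Estar 0 1 * M Estar 1 0 + M' Estar 0 1 * M' Estar 1 0
          + (M' Estar 0 1 * M' Estar 1 0 + M Estar 0 1 * M'' Estar 1 0))) Estar := by
    exact (((hM2 Estar hEU 0 0).mul (hM1 Estar hEU 1 1)).add
      ((hM1 Estar hEU 0 0).mul (hM2 Estar hEU 1 1))).sub
      (((hM2 Estar hEU 0 1).mul (hM1 Estar hEU 1 0)).add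
        ((hM1 Estar hEU 0 1).mul (hM2 Estar hEU 1 0)))
  have hf1const : f1 =ᶠ[nhds Estar] fun _ => (0 : ℝ) := by
    filter_upwards [isOpen_interior.mem_nhds hEint] with s hs
    exact hf1zero s hs
  have h20 : HasDerivAt f1 0 Estar :=
    (hasDerivAt_const Estar (0 : ℝ)).congr_of_eventuallyEq hf1const
  have key2 := hderiv2.unique h20
  have hI00 : M Estar 0 0 = 1 := by rw [hI]; simp
  have hI11 : M Estar 1 1 = 1 := by rw [hI]; simp
  have hI01 : M Estar 0 1 = 0 := by rw [hI]; simp [Matrix.one_apply]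
  have hI10 : M Estar 1 0 = 0 := by rw [hI]; simp [Matrix.one_apply]
  have r1 : M' Estar 0 0 + M' Estar 1 1 = 0 := by
    have := hf1zero Estar hEint
    rw [hf1] at this
    simp only [hI00, hI11, hI01, hI10] at this
    linarith
  have r2 : M'' Estar 0 0 + M'' Estar 1 1
      + 2 * (M' Estar 0 0 * M' Estar 1 1 - M' Estar 0 1 * M' Estar 1 0) = 0 := by
    rw [hI00, hI11, hI01, hI10] at key2
    linarith
  have htr' : (M' Estar).trace = 0 := by
    rw [Matrix.trace_fin_two]; exact r1
  have hdet' : (M' Estar).det = -(M'' Estar).trace / 2 := by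
    rw [Matrix.det_fin_two, Matrix.trace_fin_two]
    linarith
  refine ⟨?_, hdet', ?_⟩
  · have h := (hM1 Estar hEU 0 0).add (hM1 Estar hEU 1 1)
    have heq : (fun t => (M t).trace) = fun t => M t 0 0 + M t 1 1 := by
      funext t; rw [Matrix.trace_fin_two]
    rw [heq, ← r1]
    exact h
  · intro hneg β hβ
    have hargpos : 0 < -(M'' Estar).trace / 2 := by linarith
    have hβpos : 0 < β := by rw [hβ]; exact Real.sqrt_pos.mpr hargpos
    have hβ2 : β ^ 2 = -(M'' Estar).trace / 2 := by
      rw [hβ, Real.sq_sqrt hargpos.le]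
    have hdetβ : (M' Estar).det = β ^ 2 := by rw [hdet', hβ2]
    set p := M' Estar 0 0 with hp
    set q := M' Estar 0 1 with hq
    set r := M' Estar 1 0 with hr
    have hd11 : M' Estar 1 1 = -p := by linarith [r1]
    have hdet2 : -(p * p) - q * r = β ^ 2 := by
      have := hdetβ
      rw [Matrix.det_fin_two, hd11] at this
      linarith
    have hrne : r ≠ 0 := by
      intro h0
      rw [h0] at hdet2
      nlinarith
    refine ⟨⟨![1, 0], ![-p / β, -r / β], ?_, ?_, ?_⟩, ?_, ?_, ?_⟩
    · rw [linearIndependent_fin2]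
      constructor
      · intro h
        have h2 : -r / β = 0 := by simpa using congrFun h 1
        rcases div_eq_zero_iff.mp h2 with h3 | h3
        · exact hrne (by linarith)
        · exact hβpos.ne' h3
      · intro a h
        have h1 : a * (-r / β) = 0 := by simpa using congrFun h 1
        have h0 : a * (-p / β) = 1 := by simpa using congrFun h 0
        have ha : a = 0 := by
          rcases mul_eq_zero.mp h1 with ha | ha
          · exact ha
          · rcases div_eq_zero_iff.mp ha with h3 | h3
            · exact absurd (by linarith) hrne
            · exact absurd h3 hβpos.ne'
        rw [ha, zero_mul] at h0
        exact one_ne_zero h0.symm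
    · funext i
      fin_cases i <;>
        simp [Matrix.mulVec, dotProduct, Fin.sum_univ_two, hd11,
          ← hp, ← hq, ← hr] <;>
        field_simp
    · funext i
      fin_cases i <;>
        simp [Matrix.mulVec, dotProduct, Fin.sum_univ_two, hd11,
          ← hp, ← hq, ← hr] <;>
        field_simp <;> nlinarith [hdet2, hβpos]
    · intro z
      rw [htr', hdetβ]
      push_cast
      ring
    · rw [htr', hdetβ]
      push_cast
      ring_nf
      rw [Complex.I_sq]
      ring
    · rw [htr', hdetβ]
      push_cast
      ring_nf
      rw [Complex.I_sq]
      ring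
end

section
/- Let E ∈ ℝ with |D(E)| > 2, let λ₁ be the eigenvalue of M(E) with |λ₁| < 1 (which exists and is real since det M(E) = 1), and let V₁ ∈ ℝ² be an eigenvector of M(E) for λ₁. Suppose V : ℝ → ℝ² is differentiable with V'(x) = A_E(x)·V(x) for all x and V(0) ≠ 0. Then: (i) if V(0) is a scalar multiple of V₁, then ‖V(x)‖ → 0 as x → +∞ and ‖V(x)‖ → +∞ as x → −∞; (ii) if V(0) is not a scalar multiple of V₁, then ‖V(x)‖ → +∞ as x → +∞. -/
open Matrix Filter Set Topology

/-!
The coefficient matrix `A` is trace-free, so the Wronskian of two solutions is constant. Hence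
`det Ψ = 1`, every solution is `V x = Ψ x V 0` (Cramer's rule), and periodicity of `A` gives
`V (x + n) = Ψ x V n`; thus on `[n, n + 1]` the norm of `V` is comparable to that of
`V n = Mⁿ V 0`, `M = Ψ 1`. Along the integers `W(V₁, V n) = λ₁⁻ⁿ W(V₁, V 0)`: if `V 0` is not
on the line of `V₁` this forces exponential growth, and if it is, `V n` stays on that line and
equals `λ₁ⁿ V 0`.
-/

section Wronskian

variable {R : Type*} [CommRing R]

def wronskian (u v : Fin 2 → R) : R := u 0 * v 1 - u 1 * v 0

theorem wronskian_mulVec (M : Matrix (Fin 2) (Fin 2) R) (u v : Fin 2 → R) :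
    wronskian (M *ᵥ u) (M *ᵥ v) = M.det * wronskian u v := by
  simp only [wronskian, mulVec, dotProduct, Fin.sum_univ_two, det_fin_two]
  ring

theorem wronskian_smul_left (c : R) (u v : Fin 2 → R) :
    wronskian (c • u) v = c * wronskian u v := by
  simp only [wronskian, Pi.smul_apply, smul_eq_mul]
  ring

theorem wronskian_smul_eq_add (u v w : Fin 2 → R) :
    wronskian u v • w = wronskian w v • u + wronskian u w • v := by
  ext i
  fin_cases i <;> simp only [wronskian, Fin.zero_eta, Fin.mk_one, Pi.add_apply, Pi.smul_apply,
    smul_eq_mul] <;> ring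

theorem det_eq_wronskian (M : Matrix (Fin 2) (Fin 2) R) :
    M.det = wronskian (fun i => M i 0) (fun i => M i 1) := by
  simp only [det_fin_two, wronskian]
  ring

end Wronskian

theorem wronskian_eq_zero_iff {K : Type*} [Field K] {v w : Fin 2 → K} (hv : v ≠ 0) :
    wronskian v w = 0 ↔ ∃ c : K, w = c • v := by
  refine ⟨fun h => ?_, ?_⟩
  · obtain ⟨i, hi⟩ := Function.ne_iff.1 hv
    have key : v i • w = w i • v := by
      ext j
      simp only [wronskian] at h
      fin_cases i <;> fin_cases j <;>
        simp only [Fin.zero_eta, Fin.mk_one, Pi.smul_apply, smul_eq_mul] <;>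
        first | ring1 | linear_combination h | linear_combination -h
    exact ⟨w i / v i, by rw [div_eq_inv_mul, mul_smul, ← key, inv_smul_smul₀ hi]⟩
  · rintro ⟨c, rfl⟩
    simp only [wronskian, Pi.smul_apply, smul_eq_mul]
    ring

theorem norm_wronskian_le {R : Type*} [NormedCommRing R] (u v : Fin 2 → R) :
    ‖wronskian u v‖ ≤ 2 * ‖u‖ * ‖v‖ := by
  calc ‖wronskian u v‖ ≤ ‖u 0‖ * ‖v 1‖ + ‖u 1‖ * ‖v 0‖ :=
        (norm_sub_le _ _).trans (add_le_add (norm_mul_le _ _) (norm_mul_le _ _))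
    _ ≤ ‖u‖ * ‖v‖ + ‖u‖ * ‖v‖ := by gcongr <;> apply norm_le_pi_norm
    _ = 2 * ‖u‖ * ‖v‖ := by ring

theorem HasDerivAt.wronskian {𝕜 : Type*} [NontriviallyNormedField 𝕜] {u v : 𝕜 → Fin 2 → 𝕜}
    {M : Matrix (Fin 2) (Fin 2) 𝕜} {x : 𝕜} (hu : HasDerivAt u (M *ᵥ u x) x)
    (hv : HasDerivAt v (M *ᵥ v x) x) :
    HasDerivAt (fun y => wronskian (u y) (v y)) (M.trace * wronskian (u x) (v x)) x := by
  rw [hasDerivAt_pi] at hu hv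
  refine (((hu 0).mul (hv 1)).sub ((hu 1).mul (hv 0))).congr_deriv ?_
  simp only [mulVec, dotProduct, Fin.sum_univ_two, trace_fin_two, _root_.wronskian]
  ring

theorem eq_zpow_smul_of_add_one_eq_smul {K G : Type*} [GroupWithZero K] [MulAction K G]
    {s : ℤ → G} {r : K} (hr : r ≠ 0) (hs : ∀ n, s (n + 1) = r • s n) (n : ℤ) :
    s n = r ^ n • s 0 := by
  induction n using Int.induction_on with
  | zero => simp
  | succ n ih => rw [hs, ih, smul_smul, ← zpow_one_add₀ hr, add_comm]
  | pred n ih =>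
    rw [← inv_smul_smul₀ hr (s _), ← hs, sub_add_cancel, ih, smul_smul, ← _root_.zpow_neg_one,
      ← zpow_add₀ hr, neg_add_eq_sub]

theorem exists_norm_mulVec_le {X m n R : Type*} [NormedRing R] [TopologicalSpace X] [Fintype m]
    [Fintype n]    {K : Set X} (hK : IsCompact K) {Φ : X → Matrix m n R} (hΦ : ContinuousOn Φ K) :
    ∃ C, ∀ x ∈ K, ∀ v, ‖Φ x *ᵥ v‖ ≤ C * ‖v‖ := by
  let _ := Matrix.linftyOpNormedAddCommGroup (m := m) (n := n) (α := R)
  obtain ⟨C, hC⟩ := hK.exists_bound_of_continuousOn hΦ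
  exact ⟨C, fun x hx v => (linfty_opNorm_mulVec _ v).trans (by gcongr; exact hC x hx)⟩

section LinearSystem

variable {A Ψ : ℝ → Matrix (Fin 2) (Fin 2) ℝ}

theorem hasDerivAt_column (hΨ : ∀ x i j, HasDerivAt (fun y => Ψ y i j) ((A x * Ψ x) i j) x)
    (j : Fin 2) (x : ℝ) : HasDerivAt (fun y i => Ψ y i j) (A x *ᵥ fun i => Ψ x i j) x :=
  hasDerivAt_pi.2 fun i => hΨ x i j

theorem wronskian_eq_of_trace_eq_zero (htr : ∀ x, (A x).trace = 0) {u v : ℝ → Fin 2 → ℝ}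
    (hu : ∀ x, HasDerivAt u (A x *ᵥ u x) x) (hv : ∀ x, HasDerivAt v (A x *ᵥ v x) x) (x y : ℝ) :
    wronskian (u x) (v x) = wronskian (u y) (v y) := by
  have h x : HasDerivAt (fun y => wronskian (u y) (v y)) 0 x := by
    simpa only [htr, zero_mul] using (hu x).wronskian (hv x)
  exact is_const_of_deriv_eq_zero (fun x => (h x).differentiableAt) (fun x => (h x).deriv) x y

variable (htr : ∀ x, (A x).trace = 0) (hΨ0 : Ψ 0 = 1)
  (hΨ : ∀ x i j, HasDerivAt (fun y => Ψ y i j) ((A x * Ψ x) i j) x)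
include htr hΨ0 hΨ

theorem det_eq_one_of_fundamental (x : ℝ) : (Ψ x).det = 1 := by
  rw [det_eq_wronskian, wronskian_eq_of_trace_eq_zero htr (hasDerivAt_column hΨ 0)
    (hasDerivAt_column hΨ 1) x 0, ← det_eq_wronskian, hΨ0, det_one]

theorem eq_mulVec_of_fundamental {W : ℝ → Fin 2 → ℝ} (hW : ∀ x, HasDerivAt W (A x *ᵥ W x) x)
    (x : ℝ) : W x = Ψ x *ᵥ W 0 := by
  have hcramer := wronskian_smul_eq_add (fun i => Ψ x i 0) (fun i => Ψ x i 1) (W x)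
  rw [← det_eq_wronskian, det_eq_one_of_fundamental htr hΨ0 hΨ x, one_smul,
    wronskian_eq_of_trace_eq_zero htr hW (hasDerivAt_column hΨ 1) x 0,
    wronskian_eq_of_trace_eq_zero htr (hasDerivAt_column hΨ 0) hW x 0, hΨ0] at hcramer
  rw [hcramer]
  ext i
  simp [wronskian, mulVec, dotProduct, Fin.sum_univ_two, mul_comm]

theorem eq_mulVec_add_intCast (hA : Function.Periodic A 1) {W : ℝ → Fin 2 → ℝ}
    (hW : ∀ x, HasDerivAt W (A x *ᵥ W x) x) (x : ℝ) (n : ℤ) : W (x + n) = Ψ x *ᵥ W n := by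
  have hWn y : HasDerivAt (fun y => W (y + n)) (A y *ᵥ W (y + n)) y := by
    have hAn : A (y + n) = A y := by simpa using (hA.int_mul n) y
    simpa only [hAn] using (hW (y + n)).comp_add_const y n
  simpa using eq_mulVec_of_fundamental htr hΨ0 hΨ hWn x

theorem exists_norm_le_mul_norm_floor (hA : Function.Periodic A 1) {W : ℝ → Fin 2 → ℝ}
    (hW : ∀ x, HasDerivAt W (A x *ᵥ W x) x) :
    ∃ C > 0, ∀ x : ℝ, ‖W x‖ ≤ C * ‖W ⌊x⌋‖ ∧ ‖W ⌊x⌋‖ ≤ C * ‖W x‖ := by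
  have hcont : Continuous Ψ := continuous_matrix fun i j =>
    continuous_iff_continuousAt.2 fun x => (hΨ x i j).continuousAt
  obtain ⟨C₁, hC₁⟩ := exists_norm_mulVec_le isCompact_Icc hcont.continuousOn
  obtain ⟨C₂, hC₂⟩ := exists_norm_mulVec_le isCompact_Icc hcont.matrix_adjugate.continuousOn
  refine ⟨max (max C₁ C₂) 1, by positivity, fun x => ?_⟩
  have hfract : Int.fract x ∈ Icc (0 : ℝ) 1 := ⟨Int.fract_nonneg x, (Int.fract_lt_one x).le⟩
  have hx : W x = Ψ (Int.fract x) *ᵥ W ⌊x⌋ := by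
    simpa using eq_mulVec_add_intCast htr hΨ0 hΨ hA hW (Int.fract x) ⌊x⌋
  have hfloor : W ⌊x⌋ = (Ψ (Int.fract x)).adjugate *ᵥ W x := by
    rw [hx, mulVec_mulVec, adjugate_mul, det_eq_one_of_fundamental htr hΨ0 hΨ, one_smul,
      one_mulVec]
  constructor
  · calc ‖W x‖ ≤ C₁ * ‖W ⌊x⌋‖ := hx ▸ hC₁ _ hfract _
      _ ≤ _ := by gcongr; exact (le_max_left _ _).trans (le_max_left _ _)
  · calc ‖W ⌊x⌋‖ ≤ C₂ * ‖W x‖ := hfloor ▸ hC₂ _ hfract _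
      _ ≤ _ := by gcongr; exact (le_max_right _ _).trans (le_max_left _ _)

end LinearSystem

section Orbit

variable {K : Type*} [Field K] {M : Matrix (Fin 2) (Fin 2) K} {l : K} {v : Fin 2 → K}
  {u : ℤ → Fin 2 → K}

theorem ne_zero_of_mulVec_eq_smul (hM : M.det ≠ 0) (hv : M *ᵥ v = l • v) (hv0 : v ≠ 0) :
    l ≠ 0 := by
  rintro rfl
  exact hv0 (eq_zero_of_mulVec_eq_zero hM (by rw [hv, zero_smul]))

theorem wronskian_orbit (hM : M.det = 1) (hl : l ≠ 0) (hv : M *ᵥ v = l • v)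
    (hu : ∀ n, u (n + 1) = M *ᵥ u n) (n : ℤ) :
    wronskian v (u n) = l⁻¹ ^ n * wronskian v (u 0) := by
  refine eq_zpow_smul_of_add_one_eq_smul (s := fun n => wronskian v (u n)) (inv_ne_zero hl)
    (fun n => ?_) n
  rw [hu, smul_eq_mul, eq_inv_mul_iff_mul_eq₀ hl, ← wronskian_smul_left, ← hv,
    wronskian_mulVec, hM, one_mul]

theorem orbit_eq_zpow_smul (hM : M.det = 1) (hl : l ≠ 0) (hv : M *ᵥ v = l • v) (hv0 : v ≠ 0)
    (hu : ∀ n, u (n + 1) = M *ᵥ u n) (h0 : ∃ c : K, u 0 = c • v) (n : ℤ) :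
    u n = l ^ n • u 0 := by
  refine eq_zpow_smul_of_add_one_eq_smul (s := u) hl (fun n => ?_) n
  obtain ⟨c, hc⟩ := (wronskian_eq_zero_iff (w := u n) hv0).1 <| by
    rw [wronskian_orbit hM hl hv hu, (wronskian_eq_zero_iff hv0).2 h0, mul_zero]
  rw [hu, hc, mulVec_smul, hv, smul_comm]

end Orbit

theorem tendsto_zpow_atTop_nhds_zero_of_lt_one {r : ℝ} (h0 : 0 < r) (h1 : r < 1) :
    Tendsto (fun n : ℤ => r ^ n) atTop (𝓝 0) := by
  simpa only [Function.comp_def, Real.rpow_intCast] using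
    (tendsto_rpow_atTop_of_base_lt_one r (by linarith) h1).comp tendsto_intCast_atTop_atTop

theorem tendsto_zpow_atBot_atTop_of_lt_one {r : ℝ} (h0 : 0 < r) (h1 : r < 1) :
    Tendsto (fun n : ℤ => r ^ n) atBot atTop := by
  simpa only [Function.comp_def, id, Real.rpow_intCast] using
    (tendsto_rpow_atBot_of_base_lt_one r h0 h1).comp (tendsto_intCast_atBot_iff.2 tendsto_id)

section Floor

variable {E : Type*} [SeminormedAddGroup E] {f : ℝ → E} {C : ℝ}

theorem tendsto_norm_nhds_zero_of_le_floor (hf : ∀ x, ‖f x‖ ≤ C * ‖f ⌊x⌋‖)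
    (h : Tendsto (fun n : ℤ => ‖f n‖) atTop (𝓝 0)) :
    Tendsto (fun x => ‖f x‖) atTop (𝓝 0) :=
  squeeze_zero (fun _ => norm_nonneg _) hf <| by
    simpa using (h.comp tendsto_floor_atTop).const_mul C

theorem tendsto_norm_atTop_of_floor_le (hC : 0 < C) (hf : ∀ x, ‖f ⌊x⌋‖ ≤ C * ‖f x‖)
    {l : Filter ℝ} {l' : Filter ℤ} (hl : Tendsto Int.floor l l')
    (h : Tendsto (fun n : ℤ => ‖f n‖) l' atTop) : Tendsto (fun x => ‖f x‖) l atTop :=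
  tendsto_atTop_mono (fun x => (div_le_iff₀' hC).2 (hf x)) ((h.comp hl).atTop_div_const hC)

end Floor

section RealOrbit

variable {M : Matrix (Fin 2) (Fin 2) ℝ} {l : ℝ} {v : Fin 2 → ℝ} {u : ℤ → Fin 2 → ℝ}

theorem tendsto_norm_orbit_of_mem_line (hM : M.det = 1) (hl : |l| < 1) (hv : M *ᵥ v = l • v)
    (hv0 : v ≠ 0) (hu : ∀ n, u (n + 1) = M *ᵥ u n) (h0 : ∃ c : ℝ, u 0 = c • v) (hu0 : u 0 ≠ 0) :
    Tendsto (fun n => ‖u n‖) atTop (𝓝 0) ∧ Tendsto (fun n => ‖u n‖) atBot atTop := by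
  have hl0 := ne_zero_of_mulVec_eq_smul (by simp [hM]) hv hv0
  have hpos : 0 < |l| := abs_pos.2 hl0
  have hnorm : (fun n => ‖u n‖) = fun n => |l| ^ n * ‖u 0‖ := by
    ext n
    rw [orbit_eq_zpow_smul hM hl0 hv hv0 hu h0 n]
    simp [norm_smul, norm_zpow]
  rw [hnorm]
  exact ⟨by simpa using (tendsto_zpow_atTop_nhds_zero_of_lt_one hpos hl).mul_const ‖u 0‖,
    (tendsto_zpow_atBot_atTop_of_lt_one hpos hl).atTop_mul_const (norm_pos_iff.2 hu0)⟩

theorem tendsto_norm_orbit_of_not_mem_line (hM : M.det = 1) (hl : |l| < 1)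
    (hv : M *ᵥ v = l • v) (hv0 : v ≠ 0) (hu : ∀ n, u (n + 1) = M *ᵥ u n)
    (h0 : ¬∃ c : ℝ, u 0 = c • v) : Tendsto (fun n => ‖u n‖) atTop atTop := by
  have hl0 := ne_zero_of_mulVec_eq_smul (by simp [hM]) hv hv0
  have hw0 : 0 < |wronskian v (u 0)| :=
    abs_pos.2 fun h => h0 ((wronskian_eq_zero_iff hv0).1 h)
  have hlow (n : ℤ) : |l| ^ (-n) * (|wronskian v (u 0)| / (2 * ‖v‖)) ≤ ‖u n‖ := by
    have := norm_wronskian_le v (u n)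
    rw [wronskian_orbit hM hl0 hv hu n, Real.norm_eq_abs, abs_mul, abs_zpow, abs_inv,
      _root_.inv_zpow'] at this
    rw [mul_div_assoc', div_le_iff₀ (by positivity)]
    linarith
  exact tendsto_atTop_mono hlow <|
    ((tendsto_zpow_atBot_atTop_of_lt_one (abs_pos.2 hl0) hl).comp
      tendsto_neg_atTop_atBot).atTop_mul_const (by positivity)

end RealOrbit

theorem gap_mode_dichotomy_general
    (ε μ : ℝ → ℝ)
    (hεp : ∀ x, ε (x + 1) = ε x) (hμp : ∀ x, μ (x + 1) = μ x)
    (E : ℝ)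
    (Ψ : ℝ → Matrix (Fin 2) (Fin 2) ℝ)
    (hΨ0 : Ψ 0 = 1)
    (hΨ : ∀ x, ∀ i j, HasDerivAt (fun y => Ψ y i j)
      ((!![(0 : ℝ), μ x; -E * ε x, 0] * Ψ x) i j) x)
    (l₁ : ℝ) (hl₁ : |l₁| < 1)
    (V₁ : Fin 2 → ℝ) (hV₁ : V₁ ≠ 0)
    (heig : (Ψ 1).mulVec V₁ = l₁ • V₁)
    (V : ℝ → Fin 2 → ℝ)
    (hV : ∀ x, HasDerivAt V ((!![(0 : ℝ), μ x; -E * ε x, 0]).mulVec (V x)) x)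
    (hV0 : V 0 ≠ 0) :
    ((∃ c : ℝ, V 0 = c • V₁) →
      Tendsto (fun x => ‖V x‖) atTop (nhds 0) ∧
      Tendsto (fun x => ‖V x‖) atBot atTop) ∧
    ((¬ ∃ c : ℝ, V 0 = c • V₁) →
      Tendsto (fun x => ‖V x‖) atTop atTop) := by
  set A : ℝ → Matrix (Fin 2) (Fin 2) ℝ := fun x => !![0, μ x; -E * ε x, 0]
  have hA : Function.Periodic A 1 := fun x => by simp [A, hεp, hμp]
  have htr x : (A x).trace = 0 := by simp [A, trace_fin_two]
  have hdet := det_eq_one_of_fundamental htr hΨ0 hΨ 1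
  have hstep (n : ℤ) : V ↑(n + 1) = Ψ 1 *ᵥ V n := by
    simpa [add_comm] using eq_mulVec_add_intCast htr hΨ0 hΨ hA hV 1 n
  obtain ⟨C, hC, hCV⟩ := exists_norm_le_mul_norm_floor htr hΨ0 hΨ hA hV
  refine ⟨fun h0 => ?_, fun h0 => ?_⟩
  · obtain ⟨htop, hbot⟩ := tendsto_norm_orbit_of_mem_line (u := fun n : ℤ => V n) hdet hl₁ heig
      hV₁ hstep (by simpa using h0) (by simpa using hV0)
    exact ⟨tendsto_norm_nhds_zero_of_le_floor (fun x => (hCV x).1) htop,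
      tendsto_norm_atTop_of_floor_le hC (fun x => (hCV x).2) tendsto_floor_atBot hbot⟩
  · exact tendsto_norm_atTop_of_floor_le hC (fun x => (hCV x).2) tendsto_floor_atTop <|
      tendsto_norm_orbit_of_not_mem_line (u := fun n : ℤ => V n) hdet hl₁ heig hV₁ hstep
        (by simpa using h0)

/-- In a band gap (`|D(E)| > 2`), solutions of the photonic system decay at `+∞`
and blow up at `−∞` precisely when the initial vector is a multiple of the
eigenvector `V₁` of `M(E)` for the eigenvalue `λ₁` with `|λ₁| < 1`; otherwise
they blow up at `+∞`. -/
theorem gap_mode_dichotomy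
    (ε μ : ℝ → ℝ)
    (hεc : Continuous ε) (hμc : Continuous μ)
    (hεp : ∀ x, ε (x + 1) = ε x) (hμp : ∀ x, μ (x + 1) = μ x)
    (hεpos : ∀ x, 0 < ε x) (hμpos : ∀ x, 0 < μ x)
    (E : ℝ)
    (Ψ : ℝ → Matrix (Fin 2) (Fin 2) ℝ)
    (hΨ0 : Ψ 0 = 1)
    (hΨ : ∀ x, ∀ i j, HasDerivAt (fun y => Ψ y i j)
      ((!![(0 : ℝ), μ x; -E * ε x, 0] * Ψ x) i j) x)
    (hgap : |(Ψ 1).trace| > 2)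
    (l₁ : ℝ) (hl₁ : |l₁| < 1)
    (V₁ : Fin 2 → ℝ) (hV₁ : V₁ ≠ 0)
    (heig : (Ψ 1).mulVec V₁ = l₁ • V₁)
    (V : ℝ → Fin 2 → ℝ)
    (hV : ∀ x, HasDerivAt V ((!![(0 : ℝ), μ x; -E * ε x, 0]).mulVec (V x)) x)
    (hV0 : V 0 ≠ 0) :
    ((∃ c : ℝ, V 0 = c • V₁) →
      Tendsto (fun x => ‖V x‖) atTop (nhds 0) ∧
      Tendsto (fun x => ‖V x‖) atBot atTop) ∧
    ((¬ ∃ c : ℝ, V 0 = c • V₁) →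
      Tendsto (fun x => ‖V x‖) atTop atTop) :=
  gap_mode_dichotomy_general ε μ hεp hμp E Ψ hΨ0 hΨ l₁ hl₁ V₁ hV₁ heig V hV hV0
end

section
/- Suppose the monodromy matrix at (E*, 0) satisfies Ψ(1; E*, 0) = I (the condition at a Dirac point with k = 0). Then the discriminant D(E,δ) = tr Ψ(1; E, δ) is differentiable in each variable at (E*, 0) and both first partial derivatives vanish there: ∂D/∂E(E*, 0) = 0 and ∂D/∂δ(E*, 0) = 0. -/
/-!
Let `P t` solve `P' = (A + t • B) P`, `P t 0 = 1`, with `A` and `B` trace free; for the photonic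
system `t` is the shift of `E` or of `δ`. In dimension two the adjugate `Q` of `Φ = P 0` is a
two-sided inverse of `Φ` solving `Q' = -Q A`, and `(Q P t)' = t • Q B P t`. Hence `P t - Φ = O(t)`
on `[0, 1]`, and since `tr (Q B Φ) = tr B = 0` the derivative of `tr (Q P t)` is `O(t²)`. When
`Φ 1 = 1` also `Q 1 = 1`, so `tr (P t 1) - tr (Φ 1)` is the increment of `tr (Q P t)` over
`[0, 1]`, which is `O(t²)`.
-/

open Matrix
open Set Filter Topology Asymptotics

theorem HasDerivAt.of_norm_sub_le_sq {F : Type*} [NormedAddCommGroup F] [NormedSpace ℝ F]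
    {f : ℝ → F} {x C : ℝ} (h : ∀ᶠ t in 𝓝 x, ‖f t - f x‖ ≤ C * (t - x) ^ 2) :
    HasDerivAt f 0 x := by
  rw [hasDerivAt_iff_isLittleO]
  simp only [smul_zero, sub_zero]
  have hsq : (fun t => (t - x) ^ 2) =o[𝓝 x] fun t => t - x :=
    (isLittleO_pow_id one_lt_two).comp_tendsto (tendsto_sub_nhds_zero_iff.2 tendsto_id)
  refine (IsBigO.of_bound C (h.mono fun t ht => ?_)).trans_isLittleO hsq
  rwa [Real.norm_eq_abs, abs_of_nonneg (sq_nonneg _)]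

section LinearODE

variable {R : Type*} [NormedRing R] [NormedAlgebra ℝ R]

theorem hasDerivAt_mul_of_linearODE {Q P : ℝ → R} {A A₁ : R} {x : ℝ}
    (hQ : HasDerivAt Q (-(Q x * A)) x) (hP : HasDerivAt P (A₁ * P x) x) :
    HasDerivAt (fun y => Q y * P y) (Q x * (A₁ - A) * P x) x :=
  (hQ.mul hP).congr_deriv (by noncomm_ring)

theorem mul_eq_one_of_linearODE {Q P A : ℝ → R}
    (hQ : ∀ x, HasDerivAt Q (-(Q x * A x)) x) (hP : ∀ x, HasDerivAt P (A x * P x) x)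
    (h₀ : Q 0 * P 0 = 1) (x : ℝ) : Q x * P x = 1 := by
  have hd : ∀ x, HasDerivAt (fun y => Q y * P y) 0 x := fun x => by
    simpa using hasDerivAt_mul_of_linearODE (hQ x) (hP x)
  rw [← h₀]
  exact is_const_of_deriv_eq_zero (fun y => (hd y).differentiableAt) (fun y => (hd y).deriv) x 0

theorem norm_mul_sub_one_le_of_perturbed {Q P A B : ℝ → R} {t K S : ℝ}
    (hQ : ∀ x, HasDerivAt Q (-(Q x * A x)) x)
    (hP : ∀ x, HasDerivAt P ((A x + t • B x) * P x) x) (hQ0 : Q 0 = 1) (hP0 : P 0 = 1)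
    (hK : ∀ x ∈ Icc (0 : ℝ) 1, ‖Q x * B x‖ ≤ K) (hS : ∀ x ∈ Icc (0 : ℝ) 1, ‖P x‖ ≤ S)
    {x : ℝ} (hx : x ∈ Icc (0 : ℝ) 1) : ‖Q x * P x - 1‖ ≤ |t| * K * S := by
  have hK0 : 0 ≤ K := (norm_nonneg _).trans (hK 0 ⟨le_rfl, zero_le_one⟩)
  have hbound : ∀ y ∈ Ico (0 : ℝ) 1, ‖Q y * (A y + t • B y - A y) * P y‖ ≤ |t| * K * S := by
    intro y hy
    rw [add_sub_cancel_left, mul_smul_comm, smul_mul_assoc, norm_smul, Real.norm_eq_abs,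
      mul_assoc |t|]
    gcongr
    exact (norm_mul_le _ _).trans
      (mul_le_mul (hK y (Ico_subset_Icc_self hy)) (hS y (Ico_subset_Icc_self hy))
        (norm_nonneg _) hK0)
  have hmvt := norm_image_sub_le_of_norm_deriv_le_segment'
    (fun y _ => (hasDerivAt_mul_of_linearODE (hQ y) (hP y)).hasDerivWithinAt) hbound x hx
  rw [hQ0, hP0, one_mul, sub_zero] at hmvt
  have hC : 0 ≤ |t| * K * S := (norm_nonneg _).trans (hbound 0 ⟨le_rfl, zero_lt_one⟩)
  nlinarith [hx.2]

theorem exists_norm_perturbed_sub_le {Q A B : ℝ → R} {P : ℝ → ℝ → R} (hB : Continuous B)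
    (hQ : ∀ x, HasDerivAt Q (-(Q x * A x)) x)
    (hP : ∀ t x, HasDerivAt (P t) ((A x + t • B x) * P t x) x) (hP0 : ∀ t, P t 0 = 1)
    (hPQ : ∀ x, P 0 x * Q x = 1) :
    ∃ C t₀ : ℝ, 0 < t₀ ∧ ∀ t, |t| ≤ t₀ → ∀ x ∈ Icc (0 : ℝ) 1, ‖P t x - P 0 x‖ ≤ C * |t| := by
  have hQ0 : Q 0 = 1 := by simpa [hP0] using hPQ 0
  have hQc : Continuous Q := continuous_iff_continuousAt.2 fun x => (hQ x).continuousAt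
  have hPc (t : ℝ) : Continuous (P t) :=
    continuous_iff_continuousAt.2 fun x => (hP t x).continuousAt
  obtain ⟨M, hM⟩ := isCompact_Icc.exists_bound_of_continuousOn (hPc 0).continuousOn
  obtain ⟨K, hK⟩ := isCompact_Icc.exists_bound_of_continuousOn (hQc.mul hB).continuousOn
  have hM0 : 0 ≤ M := (norm_nonneg _).trans (hM 0 ⟨le_rfl, zero_le_one⟩)
  have hK0 : 0 ≤ K := (norm_nonneg _).trans (hK 0 ⟨le_rfl, zero_le_one⟩)
  refine ⟨2 * M ^ 2 * K, 1 / (2 * (M * K + 1)), by positivity, fun t ht x hx => ?_⟩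
  obtain ⟨xm, hxm, hmax⟩ := isCompact_Icc.exists_isMaxOn (nonempty_Icc.2 zero_le_one)
    (hPc t).norm.continuousOn
  set S := ‖P t xm‖
  have hdiff : ∀ y ∈ Icc (0 : ℝ) 1, ‖P t y - P 0 y‖ ≤ M * (|t| * K * S) := fun y hy =>
    calc ‖P t y - P 0 y‖ = ‖P 0 y * (Q y * P t y - 1)‖ := by
          rw [mul_sub, mul_one, ← mul_assoc, hPQ, one_mul]
      _ ≤ M * (|t| * K * S) := (norm_mul_le _ _).trans <| mul_le_mul (hM y hy)
          (norm_mul_sub_one_le_of_perturbed hQ (hP t) hQ0 (hP0 t) hK (fun z hz => hmax hz) hy)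
          (norm_nonneg _) hM0
  -- `|t| ≤ t₀` makes the perturbation a contraction, so `S` is at most `2 M`.
  have hsmall : |t| * K * M ≤ 1 / 2 := by
    rw [le_div_iff₀ (by positivity)] at ht
    nlinarith [abs_nonneg t]
  have hS : S ≤ 2 * M := by
    have := (norm_le_norm_add_norm_sub' (P t xm) (P 0 xm)).trans
      (add_le_add (hM xm hxm) (hdiff xm hxm))
    nlinarith [norm_nonneg (P t xm)]
  calc ‖P t x - P 0 x‖ ≤ M * (|t| * K * S) := hdiff x hx
    _ ≤ M * (|t| * K * (2 * M)) := by gcongr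
    _ = 2 * M ^ 2 * K * |t| := by ring

theorem hasDerivAt_perturbed_trace_eq_zero (τ : R →L[ℝ] ℝ) (hτ : ∀ a b, τ (a * b) = τ (b * a))
    {Q A B : ℝ → R} {P : ℝ → ℝ → R} (hB : Continuous B) (hτB : ∀ x, τ (B x) = 0)
    (hQ : ∀ x, HasDerivAt Q (-(Q x * A x)) x)
    (hP : ∀ t x, HasDerivAt (P t) ((A x + t • B x) * P t x) x) (hP0 : ∀ t, P t 0 = 1)
    (hPQ : ∀ x, P 0 x * Q x = 1) (hP1 : P 0 1 = 1) :
    HasDerivAt (fun t => τ (P t 1)) 0 0 := by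
  obtain ⟨C, t₀, ht₀, hC⟩ := exists_norm_perturbed_sub_le hB hQ hP hP0 hPQ
  have hQc : Continuous Q := continuous_iff_continuousAt.2 fun x => (hQ x).continuousAt
  obtain ⟨K, hK⟩ := (isCompact_Icc (a := (0 : ℝ)) (b := 1)).exists_bound_of_continuousOn
    (hQc.mul hB).continuousOn
  have hQ0 : Q 0 = 1 := by simpa [hP0] using hPQ 0
  have hQ1 : Q 1 = 1 := by simpa [hP1] using hPQ 1
  refine HasDerivAt.of_norm_sub_le_sq (C := ‖τ‖ * K * C) ?_
  filter_upwards [Metric.closedBall_mem_nhds (0 : ℝ) ht₀] with t ht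
  rw [Metric.mem_closedBall, Real.dist_eq, sub_zero] at ht
  -- `τ (Q B P₀) = τ (B) = 0`, so only the `O(t)` deviation `P t - P 0` contributes.
  have hderiv (x : ℝ) : τ (Q x * (A x + t • B x - A x) * P t x)
      = t * τ (Q x * B x * (P t x - P 0 x)) := by
    have hP0B : τ (Q x * B x * P 0 x) = 0 := by rw [hτ, ← mul_assoc, hPQ, one_mul, hτB]
    rw [add_sub_cancel_left, mul_smul_comm, smul_mul_assoc, map_smul, smul_eq_mul, mul_sub,
      map_sub, hP0B, sub_zero]
  have hbound : ∀ x ∈ Ico (0 : ℝ) 1,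
      ‖τ (Q x * (A x + t • B x - A x) * P t x)‖ ≤ ‖τ‖ * K * C * t ^ 2 := by
    intro x hx
    have hx' := Ico_subset_Icc_self hx
    have hK0 : 0 ≤ K := (norm_nonneg _).trans (hK x hx')
    calc ‖τ (Q x * (A x + t • B x - A x) * P t x)‖
        = ‖t * τ (Q x * B x * (P t x - P 0 x))‖ := by rw [hderiv]
      _ ≤ |t| * (‖τ‖ * (K * (C * |t|))) := by
          rw [norm_mul, Real.norm_eq_abs]
          gcongr
          exact τ.le_opNorm_of_le <| (norm_mul_le _ _).trans <|
            mul_le_mul (hK x hx') (hC t ht x hx') (norm_nonneg _) hK0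
      _ = ‖τ‖ * K * C * t ^ 2 := by rw [← sq_abs]; ring
  have hmvt := norm_image_sub_le_of_norm_deriv_le_segment' (f := fun x => τ (Q x * P t x))
    (fun x _ => (τ.hasFDerivAt.comp_hasDerivAt x
      (hasDerivAt_mul_of_linearODE (hQ x) (hP t x))).hasDerivWithinAt) hbound 1
    ⟨zero_le_one, le_rfl⟩
  simpa [hQ0, hQ1, hP0, hP1] using hmvt

end LinearODE

namespace Matrix

theorem adjugate_fin_two_eq_neg_of_trace_eq_zero {α : Type*} [CommRing α]
    {A : Matrix (Fin 2) (Fin 2) α} (hA : A.trace = 0) : A.adjugate = -A := by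
  rw [trace_fin_two] at hA
  rw [adjugate_fin_two]
  ext i j
  fin_cases i <;> fin_cases j <;> simp <;> linear_combination hA

theorem hasDerivAt_adjugate_fin_two {𝕜 : Type*} [NontriviallyNormedField 𝕜]
    {Φ : 𝕜 → Matrix (Fin 2) (Fin 2) 𝕜} {Φ' : Matrix (Fin 2) (Fin 2) 𝕜} {x : 𝕜}
    (h : HasDerivAt Φ Φ' x) : HasDerivAt (fun y => (Φ y).adjugate) Φ'.adjugate x := by
  have he (i j : Fin 2) : HasDerivAt (fun y => Φ y i j) (Φ' i j) x :=
    hasDerivAt_pi.1 (hasDerivAt_pi.1 h i) j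
  simp only [adjugate_fin_two]
  refine hasDerivAt_pi.2 fun i => hasDerivAt_pi.2 fun j => ?_
  fin_cases i <;> fin_cases j
  · exact he 1 1
  · exact (he 0 1).neg
  · exact (he 1 0).neg
  · exact he 0 0

theorem continuous_of_fin_two {X α : Type*} [TopologicalSpace X] [TopologicalSpace α]
    {a b c d : X → α} (ha : Continuous a) (hb : Continuous b) (hc : Continuous c)
    (hd : Continuous d) : Continuous fun x => !![a x, b x; c x, d x] :=
  continuous_matrix fun i j => by fin_cases i <;> fin_cases j <;> assumption

attribute [local instance] Matrix.linftyOpNormedRing Matrix.linftyOpNormedAlgebra in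
theorem hasDerivAt_perturbed_trace_fin_two_eq_zero {A B : ℝ → Matrix (Fin 2) (Fin 2) ℝ}
    {P : ℝ → ℝ → Matrix (Fin 2) (Fin 2) ℝ} (hA : ∀ x, (A x).trace = 0) (hBc : Continuous B)
    (hB : ∀ x, (B x).trace = 0) (hP : ∀ t x, HasDerivAt (P t) ((A x + t • B x) * P t x) x)
    (hP0 : ∀ t, P t 0 = 1) (hP1 : P 0 1 = 1) :
    HasDerivAt (fun t => (P t 1).trace) 0 0 := by
  have hΦ (x : ℝ) : HasDerivAt (P 0) (A x * P 0 x) x := by simpa using hP 0 x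
  have hQ (x : ℝ) : HasDerivAt (fun y => (P 0 y).adjugate) (-((P 0 x).adjugate * A x)) x := by
    have h := hasDerivAt_adjugate_fin_two (hΦ x)
    rwa [adjugate_mul_distrib, adjugate_fin_two_eq_neg_of_trace_eq_zero (hA x), mul_neg] at h
  have hQP := mul_eq_one_of_linearODE (P := P 0) (A := A) hQ hΦ (by simp [hP0])
  exact hasDerivAt_perturbed_trace_eq_zero
    (traceLinearMap (Fin 2) ℝ ℝ).toContinuousLinearMap trace_mul_comm hBc hB hQ hP hP0
    (fun x => mul_eq_one_comm.1 (hQP x)) hP1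

end Matrix

theorem discriminant_first_derivatives_vanish_at_dirac_general
    (ε μ εt μt : ℝ → ℝ)
    (hεc : Continuous ε)
    (hεtc : Continuous εt) (hμtc : Continuous μt)
    (Ψ : ℝ → ℝ → ℝ → Matrix (Fin 2) (Fin 2) ℝ)
    (hΨ0 : ∀ E δ : ℝ, Ψ 0 E δ = 1)
    (hΨ : ∀ x E δ : ℝ, ∀ i j, HasDerivAt (fun y => Ψ y E δ i j)
      ((!![(0 : ℝ), μ x + δ * μt x; -E * (ε x + δ * εt x), 0] * Ψ x E δ) i j) x)
    (Estar : ℝ)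
    (hDirac : Ψ 1 Estar 0 = 1) :
    HasDerivAt (fun E => (Ψ 1 E 0).trace) 0 Estar ∧
    HasDerivAt (fun δ => (Ψ 1 Estar δ).trace) 0 0 := by
  have hΨ' (x E δ : ℝ) : HasDerivAt (fun y => Ψ y E δ)
      (!![(0 : ℝ), μ x + δ * μt x; -E * (ε x + δ * εt x), 0] * Ψ x E δ) x :=
    hasDerivAt_pi.2 fun i => hasDerivAt_pi.2 (hΨ x E δ i)
  have hA₀ (x : ℝ) : (!![0, μ x; -Estar * ε x, 0]).trace = 0 := by simp [trace_fin_two]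
  constructor
  · have h := hasDerivAt_perturbed_trace_fin_two_eq_zero (P := fun t x => Ψ x (t + Estar) 0)
      (B := fun x => !![0, 0; -ε x, 0]) hA₀
      (continuous_of_fin_two continuous_const continuous_const hεc.neg continuous_const)
      (by simp [trace_fin_two])
      (fun t x => by
        convert hΨ' x (t + Estar) 0 using 2
        ext i j; fin_cases i <;> fin_cases j <;> simp; ring)
      (fun t => hΨ0 _ _) (by simpa using hDirac)
    simpa using HasDerivAt.comp_sub_const (f := fun t => (Ψ 1 (t + Estar) 0).trace) Estar Estar
      (by rwa [sub_self])
  · refine hasDerivAt_perturbed_trace_fin_two_eq_zero (P := fun t x => Ψ x Estar t)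
      (B := fun x => !![0, μt x; -Estar * εt x, 0]) hA₀
      (continuous_of_fin_two continuous_const hμtc (hεtc.const_mul (-Estar)) continuous_const)
      (by simp [trace_fin_two]) (fun t x => ?_) (hΨ0 Estar) hDirac
    convert hΨ' x Estar t using 2
    ext i j; fin_cases i <;> fin_cases j <;> simp; ring

/-- At a Dirac point with `k = 0` (i.e. `Ψ(1; E*, 0) = I`), both first partial
derivatives of the discriminant `D(E,δ) = tr Ψ(1; E, δ)` of the perturbed
photonic structure vanish. -/
theorem discriminant_first_derivatives_vanish_at_dirac
    (ε μ εt μt : ℝ → ℝ)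
    (hεc : Continuous ε) (hμc : Continuous μ)
    (hεtc : Continuous εt) (hμtc : Continuous μt)
    (hεp : ∀ x, ε (x + 1) = ε x) (hμp : ∀ x, μ (x + 1) = μ x)
    (hεtp : ∀ x, εt (x + 1) = εt x) (hμtp : ∀ x, μt (x + 1) = μt x)
    (hεpos : ∀ x, 0 < ε x) (hμpos : ∀ x, 0 < μ x)
    (Ψ : ℝ → ℝ → ℝ → Matrix (Fin 2) (Fin 2) ℝ)
    (hΨ0 : ∀ E δ : ℝ, Ψ 0 E δ = 1)
    (hΨ : ∀ x E δ : ℝ, ∀ i j, HasDerivAt (fun y => Ψ y E δ i j)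
      ((!![(0 : ℝ), μ x + δ * μt x; -E * (ε x + δ * εt x), 0] * Ψ x E δ) i j) x)
    (Estar : ℝ)
    (hDirac : Ψ 1 Estar 0 = 1) :
    HasDerivAt (fun E => (Ψ 1 E 0).trace) 0 Estar ∧
    HasDerivAt (fun δ => (Ψ 1 Estar δ).trace) 0 0 :=
  discriminant_first_derivatives_vanish_at_dirac_general ε μ εt μt hεc hεtc hμtc Ψ hΨ0 hΨ Estar
    hDirac
end

section
/- Suppose the monodromy matrix satisfies M(E*) = Ψ_{E*}(1) = I for some E* ∈ ℝ (the condition at a Dirac point with k = 0). Then the discriminant D is twice differentiable at E* and D''(E*) = 2·[ (∫₀¹ ε(x)·ψ_{E*,1}(x)·ψ_{E*,2}(x) dx)² − (∫₀¹ ε(x)·ψ_{E*,1}(x)² dx)·(∫₀¹ ε(x)·ψ_{E*,2}(x)² dx) ], and this quantity is strictly negative: D''(E*) < 0. -/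
/-!
Comparing the solutions at two energies `F` and `G` (Lagrange's identity for the Wronskian, together
with `det Ψ = 1`) gives the exact formula `Ψ_G(x) = Ψ_F(x) (1 + (F - G) K(F, G, x))`, where the
entries of `K` are integrals `∫₀ˣ ε ψ_{F,j} ψ_{G,k}`. Taking traces at `x = 1`,
`D(G) - D(F) = (G - F) · (-tr (Ψ_F(1) K(F, G, 1)))`, so `D'(F) = -tr (Ψ_F(1) K(F, F, 1))` as soon as
`K` depends continuously on the energies; this continuity comes from a Gronwall bound on `Ψ`.
At a Dirac point `Ψ_{E*}(1) = 1`, so `Ψ_F(1) = 1 + (E* - F) K(E*, F, 1)`, and `tr K(F, F, 1) = 0`;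
hence `D'(F) = (F - E*) tr (K(E*, F, 1) K(F, F, 1))` and `D''(E*) = tr K(E*, E*, 1)²`. This trace is
negative by the strict Cauchy–Schwarz inequality, because the first-row solutions `ψ_{E*,1}` and
`ψ_{E*,2}` are linearly independent.
-/

open Matrix Set Filter Topology intervalIntegral

open scoped Interval

theorem hasDerivAt_of_sub_eq_mul {𝕜 : Type*} [NontriviallyNormedField 𝕜] {f g : 𝕜 → 𝕜} {x : 𝕜}
    (h : ∀ y, f y - f x = (y - x) * g y) (hg : ContinuousAt g x) : HasDerivAt f (g x) x := by
  rw [hasDerivAt_iff_tendsto_slope]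
  refine (hg.tendsto.mono_left nhdsWithin_le_nhds).congr' ?_
  filter_upwards [self_mem_nhdsWithin] with y hy
  rw [slope_def_field, h, mul_div_cancel_left₀ _ (sub_ne_zero.2 hy)]

theorem sq_integral_mul_lt_mul {ε f g : ℝ → ℝ} (hε : ContinuousOn ε (Icc 0 1))
    (hεpos : ∀ x ∈ Icc (0 : ℝ) 1, 0 < ε x) (hf : ContinuousOn f (Icc 0 1))
    (hg : ContinuousOn g (Icc 0 1))
    (hfg : ∀ a b : ℝ, (∀ x ∈ Icc (0 : ℝ) 1, a * f x + b * g x = 0) → a = 0 ∧ b = 0) :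
    (∫ x in (0 : ℝ)..1, ε x * f x * g x) ^ 2
      < (∫ x in (0 : ℝ)..1, ε x * f x ^ 2) * ∫ x in (0 : ℝ)..1, ε x * g x ^ 2 := by
  set P := ∫ x in (0 : ℝ)..1, ε x * f x ^ 2
  set Q := ∫ x in (0 : ℝ)..1, ε x * f x * g x
  set R := ∫ x in (0 : ℝ)..1, ε x * g x ^ 2
  have integrable : ∀ {u : ℝ → ℝ}, ContinuousOn u (Icc 0 1) →
      IntervalIntegrable u MeasureTheory.volume 0 1 :=
    fun hu => (uIcc_of_le (zero_le_one' ℝ) ▸ hu).intervalIntegrable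
  have hexpand : ∀ a b : ℝ, ∫ x in (0 : ℝ)..1, ε x * (a * f x + b * g x) ^ 2
      = a ^ 2 * P + 2 * a * b * Q + b ^ 2 * R := by
    intro a b
    have hP : IntervalIntegrable (fun x => ε x * f x ^ 2) MeasureTheory.volume 0 1 :=
      integrable (hε.mul (hf.pow 2))
    have hQ : IntervalIntegrable (fun x => ε x * f x * g x) MeasureTheory.volume 0 1 :=
      integrable ((hε.mul hf).mul hg)
    have hR : IntervalIntegrable (fun x => ε x * g x ^ 2) MeasureTheory.volume 0 1 :=
      integrable (hε.mul (hg.pow 2))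
    rw [← integral_const_mul, ← integral_const_mul, ← integral_const_mul,
      ← integral_add (hP.const_mul _) (hQ.const_mul _),
      ← integral_add ((hP.const_mul _).add (hQ.const_mul _)) (hR.const_mul _)]
    exact integral_congr fun x _ => by ring
  have hpos : ∀ a b : ℝ, a ≠ 0 ∨ b ≠ 0 → 0 < a ^ 2 * P + 2 * a * b * Q + b ^ 2 * R := by
    intro a b hab
    obtain ⟨y, hy, hne⟩ : ∃ y ∈ Icc (0 : ℝ) 1, a * f y + b * g y ≠ 0 := by
      by_contra! h
      rcases hfg a b h with ⟨rfl, rfl⟩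
      simp at hab
    have hu : ContinuousOn (fun x => a * f x + b * g x) (Icc 0 1) :=
      (continuousOn_const.mul hf).add (continuousOn_const.mul hg)
    rw [← hexpand]
    exact integral_pos zero_lt_one (hε.mul (hu.pow 2))
      (fun x hx => mul_nonneg (hεpos x (Ioc_subset_Icc_self hx)).le (sq_nonneg _))
      ⟨y, hy, mul_pos (hεpos y hy) (sq_pos_of_ne_zero hne)⟩
  have hP : 0 < P := by simpa using hpos 1 0 (Or.inl one_ne_zero)
  have hdiscr := discrim_lt_zero (b := -2 * Q) (c := R) hP.ne' fun t => by
    have := hpos t (-1) (Or.inr (by norm_num))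
    linarith
  rw [discrim] at hdiscr
  nlinarith

def SolvesTransferEquation (ε μ : ℝ → ℝ) (Ψ : ℝ → ℝ → Matrix (Fin 2) (Fin 2) ℝ) : Prop :=
  ∀ E x : ℝ, ∀ i j, HasDerivAt (fun y => Ψ E y i j) ((!![(0 : ℝ), μ x; -E * ε x, 0] * Ψ E x) i j) x

noncomputable def weightedIntegral (ε : ℝ → ℝ) (Ψ : ℝ → ℝ → Matrix (Fin 2) (Fin 2) ℝ) (F G x : ℝ)
    (j k : Fin 2) : ℝ :=
  ∫ s in (0 : ℝ)..x, ε s * (Ψ F s 0 j * Ψ G s 0 k)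

/-- Variation of parameters: `Ψ_F(x)⁻¹ Ψ_G(x) = 1 + (F - G) • variationKernel ε Ψ F G x`, the
kernel being `∫₀ˣ Ψ_F⁻¹ !![0, 0; ε, 0] Ψ_G`. -/
noncomputable def variationKernel (ε : ℝ → ℝ) (Ψ : ℝ → ℝ → Matrix (Fin 2) (Fin 2) ℝ) (F G x : ℝ) :
    Matrix (Fin 2) (Fin 2) ℝ :=
  !![-weightedIntegral ε Ψ F G x 1 0, -weightedIntegral ε Ψ F G x 1 1;
    weightedIntegral ε Ψ F G x 0 0, weightedIntegral ε Ψ F G x 0 1]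

theorem abs_weightedIntegral_le {ε : ℝ → ℝ} {Ψ : ℝ → ℝ → Matrix (Fin 2) (Fin 2) ℝ}
    {F G x Cε C : ℝ} {j k : Fin 2} (hε : ∀ s ∈ Icc (0 : ℝ) 1, ‖ε s‖ ≤ Cε)
    (hF : ∀ s ∈ Icc (0 : ℝ) 1, |Ψ F s 0 j| ≤ C) (hG : ∀ s ∈ Icc (0 : ℝ) 1, |Ψ G s 0 k| ≤ C)
    (hx : x ∈ Icc (0 : ℝ) 1) :
    |weightedIntegral ε Ψ F G x j k| ≤ Cε * (C * C) := by
  have hC : 0 ≤ C := (abs_nonneg _).trans (hF 0 ⟨le_rfl, zero_le_one⟩)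
  have hCε : 0 ≤ Cε := (norm_nonneg _).trans (hε 0 ⟨le_rfl, zero_le_one⟩)
  have hbound : ∀ s ∈ Ι 0 x, ‖ε s * (Ψ F s 0 j * Ψ G s 0 k)‖ ≤ Cε * (C * C) := by
    intro s hs
    rw [uIoc_of_le hx.1] at hs
    have hs' : s ∈ Icc (0 : ℝ) 1 := ⟨hs.1.le, hs.2.trans hx.2⟩
    rw [norm_mul, norm_mul, Real.norm_eq_abs, Real.norm_eq_abs]
    exact mul_le_mul (hε s hs') (mul_le_mul (hF s hs') (hG s hs') (abs_nonneg _) hC)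
      (by positivity) hCε
  calc |weightedIntegral ε Ψ F G x j k| ≤ Cε * (C * C) * |x - 0| :=
        norm_integral_le_of_norm_le_const hbound
    _ ≤ Cε * (C * C) :=
        mul_le_of_le_one_right (by positivity) (by rw [sub_zero, abs_of_nonneg hx.1]; exact hx.2)

namespace SolvesTransferEquation

variable {ε μ : ℝ → ℝ} {Ψ : ℝ → ℝ → Matrix (Fin 2) (Fin 2) ℝ}

theorem hasDerivAt_row_zero (hΨ : SolvesTransferEquation ε μ Ψ) (E x : ℝ) (j : Fin 2) :
    HasDerivAt (fun y => Ψ E y 0 j) (μ x * Ψ E x 1 j) x := by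
  simpa [Matrix.mul_apply, Fin.sum_univ_two] using hΨ E x 0 j

theorem hasDerivAt_row_one (hΨ : SolvesTransferEquation ε μ Ψ) (E x : ℝ) (j : Fin 2) :
    HasDerivAt (fun y => Ψ E y 1 j) (-E * ε x * Ψ E x 0 j) x := by
  simpa [Matrix.mul_apply, Fin.sum_univ_two] using hΨ E x 1 j

theorem continuous_entry (hΨ : SolvesTransferEquation ε μ Ψ) (E : ℝ) (i j : Fin 2) :
    Continuous fun x => Ψ E x i j :=
  continuous_iff_continuousAt.2 fun x => (hΨ E x i j).continuousAt

theorem wronskian_eq (hΨ : SolvesTransferEquation ε μ Ψ) (hΨ0 : ∀ E, Ψ E 0 = 1)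
    (hε : Continuous ε) (F G x : ℝ) (j k : Fin 2) :
    Ψ F x 0 j * Ψ G x 1 k - Ψ F x 1 j * Ψ G x 0 k
      = !![0, 1; -1, 0] j k + (F - G) * weightedIntegral ε Ψ F G x j k := by
  have hderiv : ∀ s, HasDerivAt (fun y => Ψ F y 0 j * Ψ G y 1 k - Ψ F y 1 j * Ψ G y 0 k)
      ((F - G) * (ε s * (Ψ F s 0 j * Ψ G s 0 k))) s := fun s =>
    (((hΨ.hasDerivAt_row_zero F s j).mul (hΨ.hasDerivAt_row_one G s k)).sub
      ((hΨ.hasDerivAt_row_one F s j).mul (hΨ.hasDerivAt_row_zero G s k))).congr_deriv (by ring)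
  have hintegrable : IntervalIntegrable (fun s => (F - G) * (ε s * (Ψ F s 0 j * Ψ G s 0 k)))
      MeasureTheory.volume 0 x :=
    (continuous_const.mul (hε.mul ((hΨ.continuous_entry F 0 j).mul
      (hΨ.continuous_entry G 0 k)))).intervalIntegrable 0 x
  have hftc := integral_eq_sub_of_hasDerivAt (fun s _ => hderiv s) hintegrable
  have hinit : Ψ F 0 0 j * Ψ G 0 1 k - Ψ F 0 1 j * Ψ G 0 0 k = !![0, 1; -1, 0] j k := by
    rw [hΨ0, hΨ0]
    fin_cases j <;> fin_cases k <;> simp [Matrix.one_apply]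
  rw [integral_const_mul] at hftc
  rw [weightedIntegral, ← hinit, hftc]
  ring

theorem det_eq_one (hΨ : SolvesTransferEquation ε μ Ψ) (hΨ0 : ∀ E, Ψ E 0 = 1)
    (hε : Continuous ε) (E x : ℝ) : (Ψ E x).det = 1 := by
  simpa [det_fin_two, mul_comm] using hΨ.wronskian_eq hΨ0 hε E E x 0 1

theorem eq_mul_one_add_variationKernel (hΨ : SolvesTransferEquation ε μ Ψ)
    (hΨ0 : ∀ E, Ψ E 0 = 1) (hε : Continuous ε) (F G x : ℝ) :
    Ψ G x = Ψ F x * (1 + (F - G) • variationKernel ε Ψ F G x) := by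
  have hadj : adjugate (Ψ F x) * Ψ G x = 1 + (F - G) • variationKernel ε Ψ F G x := by
    have W00 := hΨ.wronskian_eq hΨ0 hε F G x 0 0
    have W01 := hΨ.wronskian_eq hΨ0 hε F G x 0 1
    have W10 := hΨ.wronskian_eq hΨ0 hε F G x 1 0
    have W11 := hΨ.wronskian_eq hΨ0 hε F G x 1 1
    ext i k
    fin_cases i <;> fin_cases k <;>
      simp only [adjugate_fin_two, variationKernel, Matrix.mul_apply, Fin.sum_univ_two,
        Matrix.add_apply, Matrix.smul_apply, smul_eq_mul, of_apply, cons_val', cons_val_zero,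
        cons_val_one, cons_val_fin_one, one_fin_two, Fin.zero_eta, Fin.mk_one]
        at W00 W01 W10 W11 ⊢ <;>
      linarith
  rw [← hadj, ← Matrix.mul_assoc, mul_adjugate, hΨ.det_eq_one hΨ0 hε, one_smul, Matrix.one_mul]

theorem sum_sq_entries_le (hΨ : SolvesTransferEquation ε μ Ψ) (hΨ0 : ∀ E, Ψ E 0 = 1) {E K : ℝ}
    (hK : ∀ t ∈ Icc (0 : ℝ) 1, |μ t - E * ε t| ≤ K) {x : ℝ} (hx : x ∈ Icc (0 : ℝ) 1) :
    ∑ i, ∑ j, Ψ E x i j ^ 2 ≤ 2 * Real.exp (K * x) := by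
  set φ : ℝ → ℝ := fun y => ∑ i, ∑ j, Ψ E y i j ^ 2
  set φ' : ℝ → ℝ := fun y => 2 * (μ y - E * ε y) * ∑ j, Ψ E y 0 j * Ψ E y 1 j
  have hφ : ∀ y, HasDerivAt φ (φ' y) y := by
    intro y
    have h0 := fun j => (hΨ.hasDerivAt_row_zero E y j).fun_pow 2
    have h1 := fun j => (hΨ.hasDerivAt_row_one E y j).fun_pow 2
    simp only [φ, φ', Fin.sum_univ_two]
    exact (((h0 0).fun_add (h0 1)).fun_add ((h1 0).fun_add (h1 1))).congr_deriv (by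
      norm_num
      ring)
  have hφ_nonneg : ∀ y, 0 ≤ φ y := fun y => by positivity
  have hφ0 : φ 0 = 2 := by
    norm_num [φ, hΨ0, Fin.sum_univ_two, one_fin_two]
  have hbound : ∀ y ∈ Ico (0 : ℝ) 1, ‖φ' y‖ ≤ K * ‖φ y‖ + 0 := by
    intro y hy
    have hcross : |2 * ∑ j, Ψ E y 0 j * Ψ E y 1 j| ≤ φ y := by
      simp only [φ, Fin.sum_univ_two, abs_le]
      constructor <;> nlinarith [sq_nonneg (Ψ E y 0 0 + Ψ E y 1 0),
        sq_nonneg (Ψ E y 0 1 + Ψ E y 1 1), sq_nonneg (Ψ E y 0 0 - Ψ E y 1 0),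
        sq_nonneg (Ψ E y 0 1 - Ψ E y 1 1)]
    rw [Real.norm_eq_abs, Real.norm_eq_abs, abs_of_nonneg (hφ_nonneg y), add_zero,
      show φ' y = (μ y - E * ε y) * (2 * ∑ j, Ψ E y 0 j * Ψ E y 1 j) by simp only [φ']; ring,
      abs_mul]
    exact mul_le_mul (hK y (Ico_subset_Icc_self hy)) hcross (abs_nonneg _)
      ((abs_nonneg _).trans (hK y (Ico_subset_Icc_self hy)))
  have := norm_le_gronwallBound_of_norm_deriv_right_le (δ := 2)
    (fun y _ => (hφ y).continuousAt.continuousWithinAt) (fun y _ => (hφ y).hasDerivWithinAt)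
    (by rw [hφ0, Real.norm_two]) hbound x hx
  rwa [Real.norm_eq_abs, abs_of_nonneg (hφ_nonneg x), gronwallBound_ε0, sub_zero] at this

theorem exists_abs_entry_le (hΨ : SolvesTransferEquation ε μ Ψ) (hΨ0 : ∀ E, Ψ E 0 = 1)
    (hε : Continuous ε) (hμ : Continuous μ) (F : ℝ) :
    ∃ C, ∀ E ∈ Icc (F - 1) (F + 1), ∀ x ∈ Icc (0 : ℝ) 1, ∀ i j, |Ψ E x i j| ≤ C := by
  obtain ⟨K, hK⟩ := (isCompact_Icc.prod isCompact_Icc).exists_bound_of_continuousOn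
    (f := fun p : ℝ × ℝ => μ p.2 - p.1 * ε p.2) (s := Icc (F - 1) (F + 1) ×ˢ Icc (0 : ℝ) 1)
    (by fun_prop)
  refine ⟨Real.sqrt (2 * Real.exp |K|), fun E hE x hx i j => Real.abs_le_sqrt ?_⟩
  calc Ψ E x i j ^ 2 ≤ ∑ j, Ψ E x i j ^ 2 :=
        Finset.single_le_sum (fun j _ => sq_nonneg (Ψ E x i j)) (Finset.mem_univ j)
    _ ≤ ∑ i, ∑ j, Ψ E x i j ^ 2 :=
        Finset.single_le_sum (f := fun i => ∑ j, Ψ E x i j ^ 2)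
          (fun i _ => Finset.sum_nonneg fun j _ => sq_nonneg _) (Finset.mem_univ i)
    _ ≤ 2 * Real.exp (K * x) :=
        hΨ.sum_sq_entries_le hΨ0 (fun t ht => hK (E, t) ⟨hE, ht⟩) hx
    _ ≤ 2 * Real.exp |K| := by
        gcongr
        calc K * x ≤ |K| * x := by gcongr; exacts [hx.1, le_abs_self K]
          _ ≤ |K| := mul_le_of_le_one_right (abs_nonneg K) hx.2

theorem row_zero_eq (hΨ : SolvesTransferEquation ε μ Ψ) (hΨ0 : ∀ E, Ψ E 0 = 1)
    (hε : Continuous ε) (F G x : ℝ) (k : Fin 2) :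
    Ψ G x 0 k = Ψ F x 0 k + (F - G) * (Ψ F x 0 1 * weightedIntegral ε Ψ F G x 0 k
      - Ψ F x 0 0 * weightedIntegral ε Ψ F G x 1 k) := by
  have h := congrFun (congrFun (hΨ.eq_mul_one_add_variationKernel hΨ0 hε F G x) 0) k
  fin_cases k <;>
    simp only [variationKernel, one_fin_two, Matrix.mul_apply, Fin.sum_univ_two, Matrix.add_apply,
      Matrix.smul_apply, smul_eq_mul, of_apply, cons_val', cons_val_zero, cons_val_one,
      cons_val_fin_one, Fin.zero_eta, Fin.mk_one] at h ⊢ <;>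
    linear_combination h

theorem continuousAt_row_zero_param (hΨ : SolvesTransferEquation ε μ Ψ) (hΨ0 : ∀ E, Ψ E 0 = 1)
    (hε : Continuous ε) (hμ : Continuous μ) {x : ℝ} (hx : x ∈ Icc (0 : ℝ) 1) (F : ℝ)
    (k : Fin 2) : ContinuousAt (fun E => Ψ E x 0 k) F := by
  obtain ⟨C, hC⟩ := hΨ.exists_abs_entry_le hΨ0 hε hμ F
  obtain ⟨Cε, hCε⟩ := isCompact_Icc.exists_bound_of_continuousOn (hε.continuousOn (s := Icc 0 1))
  have hF : F ∈ Icc (F - 1) (F + 1) := ⟨by linarith, by linarith⟩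
  have hC0 : 0 ≤ C := (abs_nonneg _).trans (hC F hF x hx 0 0)
  set b := fun G => Ψ F x 0 1 * weightedIntegral ε Ψ F G x 0 k
      - Ψ F x 0 0 * weightedIntegral ε Ψ F G x 1 k
  have hb : ∀ᶠ G in 𝓝 F, ‖b G‖ ≤ 2 * (C * (Cε * (C * C))) := by
    filter_upwards [Icc_mem_nhds (show F - 1 < F by linarith) (show F < F + 1 by linarith)]
      with G hG
    have hI : ∀ j, |weightedIntegral ε Ψ F G x j k| ≤ Cε * (C * C) := fun j =>
      abs_weightedIntegral_le hCε (fun s hs => hC F hF s hs 0 j) (fun s hs => hC G hG s hs 0 k) hx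
    calc ‖b G‖ ≤ |Ψ F x 0 1| * |weightedIntegral ε Ψ F G x 0 k|
          + |Ψ F x 0 0| * |weightedIntegral ε Ψ F G x 1 k| := by
          rw [Real.norm_eq_abs, ← abs_mul, ← abs_mul]; exact abs_sub _ _
      _ ≤ C * (Cε * (C * C)) + C * (Cε * (C * C)) :=
          add_le_add (mul_le_mul (hC F hF x hx 0 1) (hI 0) (abs_nonneg _) hC0)
            (mul_le_mul (hC F hF x hx 0 0) (hI 1) (abs_nonneg _) hC0)
      _ = 2 * (C * (Cε * (C * C))) := by ring
  have hsub : Tendsto (fun G => F - G) (𝓝 F) (𝓝 0) := by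
    simpa using (tendsto_const_nhds (x := F)).sub (tendsto_id (x := 𝓝 F))
  have := (tendsto_const_nhds (x := Ψ F x 0 k)).add
    (hsub.zero_mul_isBoundedUnder_le (isBoundedUnder_of_eventually_le hb))
  rw [add_zero] at this
  simpa only [ContinuousAt, b, ← hΨ.row_zero_eq hΨ0 hε] using this

theorem continuous_weightedIntegral (hΨ : SolvesTransferEquation ε μ Ψ) (hΨ0 : ∀ E, Ψ E 0 = 1)
    (hε : Continuous ε) (hμ : Continuous μ) (j k : Fin 2) :
    Continuous fun p : ℝ × ℝ => weightedIntegral ε Ψ p.1 p.2 1 j k := by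
  refine continuous_iff_continuousAt.2 fun p => ?_
  obtain ⟨C₁, hC₁⟩ := hΨ.exists_abs_entry_le hΨ0 hε hμ p.1
  obtain ⟨C₂, hC₂⟩ := hΨ.exists_abs_entry_le hΨ0 hε hμ p.2
  have hnear : ∀ᶠ q in 𝓝 p, q ∈ Icc (p.1 - 1) (p.1 + 1) ×ˢ Icc (p.2 - 1) (p.2 + 1) :=
    prod_mem_nhds (Icc_mem_nhds (by linarith) (by linarith))
      (Icc_mem_nhds (by linarith) (by linarith))
  have hIoc : ∀ s ∈ Ι (0 : ℝ) 1, s ∈ Icc (0 : ℝ) 1 := fun s hs => by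
    rw [uIoc_of_le zero_le_one] at hs; exact Ioc_subset_Icc_self hs
  refine continuousAt_of_dominated_interval (bound := fun s => |ε s| * (C₁ * C₂))
    (.of_forall fun q => ?_) ?_ ((hε.abs.mul continuous_const).intervalIntegrable 0 1) ?_
  · exact (hε.mul ((hΨ.continuous_entry q.1 0 j).mul
      (hΨ.continuous_entry q.2 0 k))).aestronglyMeasurable
  · filter_upwards [hnear] with q hq
    refine MeasureTheory.ae_of_all _ fun s hs => ?_
    rw [norm_mul, norm_mul, Real.norm_eq_abs, Real.norm_eq_abs, Real.norm_eq_abs]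
    gcongr
    exacts [(abs_nonneg _).trans (hC₁ q.1 hq.1 s (hIoc s hs) 0 j), hC₁ q.1 hq.1 s (hIoc s hs) 0 j,
      hC₂ q.2 hq.2 s (hIoc s hs) 0 k]
  · refine MeasureTheory.ae_of_all _ fun s hs => ?_
    exact continuousAt_const.mul
      (((hΨ.continuousAt_row_zero_param hΨ0 hε hμ (hIoc s hs) p.1 j).comp continuousAt_fst).mul
        ((hΨ.continuousAt_row_zero_param hΨ0 hε hμ (hIoc s hs) p.2 k).comp continuousAt_snd))

theorem continuous_variationKernel (hΨ : SolvesTransferEquation ε μ Ψ) (hΨ0 : ∀ E, Ψ E 0 = 1)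
    (hε : Continuous ε) (hμ : Continuous μ) :
    Continuous fun p : ℝ × ℝ => variationKernel ε Ψ p.1 p.2 1 := by
  have h := hΨ.continuous_weightedIntegral hΨ0 hε hμ
  refine continuous_matrix fun i k => ?_
  fin_cases i <;> fin_cases k
  exacts [(h 1 0).neg, (h 1 1).neg, h 0 0, h 0 1]

theorem row_zero_linearIndependent (hΨ : SolvesTransferEquation ε μ Ψ) (hΨ0 : ∀ E, Ψ E 0 = 1)
    (hμ0 : μ 0 ≠ 0) (E a b : ℝ) (h : ∀ x ∈ Icc (0 : ℝ) 1, a * Ψ E x 0 0 + b * Ψ E x 0 1 = 0) :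
    a = 0 ∧ b = 0 := by
  have h0 : (0 : ℝ) ∈ Icc (0 : ℝ) 1 := ⟨le_rfl, zero_le_one⟩
  have ha : a = 0 := by simpa [hΨ0] using h 0 h0
  have hderiv := (((hΨ.hasDerivAt_row_zero E 0 0).const_mul a).add
    ((hΨ.hasDerivAt_row_zero E 0 1).const_mul b)).hasDerivWithinAt (s := Icc 0 1)
  have hzero : HasDerivWithinAt (fun x => a * Ψ E x 0 0 + b * Ψ E x 0 1) 0 (Icc 0 1) 0 :=
    (hasDerivWithinAt_const 0 _ 0).congr_of_mem h h0
  have := (uniqueDiffOn_Icc_zero_one 0 h0).eq_deriv _ hderiv hzero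
  exact ⟨ha, by simpa [hΨ0, hμ0, ha] using this⟩

theorem hasDerivAt_trace (hΨ : SolvesTransferEquation ε μ Ψ) (hΨ0 : ∀ E, Ψ E 0 = 1)
    (hε : Continuous ε) (hμ : Continuous μ) (F : ℝ) :
    HasDerivAt (fun E => (Ψ E 1).trace) (-(Ψ F 1 * variationKernel ε Ψ F F 1).trace) F := by
  refine hasDerivAt_of_sub_eq_mul (g := fun G => -(Ψ F 1 * variationKernel ε Ψ F G 1).trace)
    (fun G => ?_) ?_
  · rw [hΨ.eq_mul_one_add_variationKernel hΨ0 hε F G 1, Matrix.mul_add, Matrix.mul_one,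
      Matrix.mul_smul, trace_add, trace_smul, smul_eq_mul]
    ring
  · exact ((continuous_const.matrix_mul ((hΨ.continuous_variationKernel hΨ0 hε hμ).comp
      (continuous_const.prodMk continuous_id))).matrix_trace.neg).continuousAt

theorem trace_variationKernel_self (E x : ℝ) : (variationKernel ε Ψ E E x).trace = 0 := by
  simp [variationKernel, trace_fin_two, weightedIntegral, mul_comm]

theorem neg_trace_mul_variationKernel_eq (hΨ : SolvesTransferEquation ε μ Ψ)
    (hΨ0 : ∀ E, Ψ E 0 = 1) (hε : Continuous ε) {E₀ : ℝ} (hE₀ : Ψ E₀ 1 = 1) (F : ℝ) :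
    -(Ψ F 1 * variationKernel ε Ψ F F 1).trace
      = (F - E₀) * (variationKernel ε Ψ E₀ F 1 * variationKernel ε Ψ F F 1).trace := by
  rw [hΨ.eq_mul_one_add_variationKernel hΨ0 hε E₀ F 1, hE₀, Matrix.one_mul, Matrix.add_mul,
    Matrix.one_mul, Matrix.smul_mul, trace_add, trace_smul, trace_variationKernel_self, smul_eq_mul]
  ring

theorem hasDerivAt_neg_trace_mul_variationKernel (hΨ : SolvesTransferEquation ε μ Ψ)
    (hΨ0 : ∀ E, Ψ E 0 = 1) (hε : Continuous ε) (hμ : Continuous μ) {E₀ : ℝ} (hE₀ : Ψ E₀ 1 = 1) :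
    HasDerivAt (fun F => -(Ψ F 1 * variationKernel ε Ψ F F 1).trace)
      (variationKernel ε Ψ E₀ E₀ 1 * variationKernel ε Ψ E₀ E₀ 1).trace E₀ := by
  have hK := hΨ.continuous_variationKernel hΨ0 hε hμ
  refine hasDerivAt_of_sub_eq_mul
    (g := fun F => (variationKernel ε Ψ E₀ F 1 * variationKernel ε Ψ F F 1).trace) (fun F => ?_) ?_
  · simp only [hΨ.neg_trace_mul_variationKernel_eq hΨ0 hε hE₀]
    ring
  · exact ((hK.comp (continuous_const.prodMk continuous_id)).matrix_mul
      (hK.comp (continuous_id.prodMk continuous_id))).matrix_trace.continuousAt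

theorem trace_variationKernel_sq (E : ℝ) :
    (variationKernel ε Ψ E E 1 * variationKernel ε Ψ E E 1).trace
      = 2 * ((∫ x in (0 : ℝ)..1, ε x * Ψ E x 0 0 * Ψ E x 0 1) ^ 2
        - (∫ x in (0 : ℝ)..1, ε x * Ψ E x 0 0 ^ 2) * ∫ x in (0 : ℝ)..1, ε x * Ψ E x 0 1 ^ 2) := by
  have hsymm : weightedIntegral ε Ψ E E 1 1 0 = weightedIntegral ε Ψ E E 1 0 1 := by
    simp only [weightedIntegral, mul_comm (Ψ E _ 0 1)]
  have h01 : weightedIntegral ε Ψ E E 1 0 1 = ∫ x in (0 : ℝ)..1, ε x * Ψ E x 0 0 * Ψ E x 0 1 :=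
    integral_congr fun x _ => by ring
  have h00 : weightedIntegral ε Ψ E E 1 0 0 = ∫ x in (0 : ℝ)..1, ε x * Ψ E x 0 0 ^ 2 :=
    integral_congr fun x _ => by ring
  have h11 : weightedIntegral ε Ψ E E 1 1 1 = ∫ x in (0 : ℝ)..1, ε x * Ψ E x 0 1 ^ 2 :=
    integral_congr fun x _ => by ring
  simp only [variationKernel, trace_fin_two, Matrix.mul_apply, Fin.sum_univ_two, of_apply,
    cons_val', cons_val_zero, cons_val_one, empty_val', cons_val_fin_one, hsymm, h01, h00, h11]
  ring

end SolvesTransferEquation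

theorem discriminant_second_derivative_at_dirac_general
    (ε μ : ℝ → ℝ)
    (hεc : Continuous ε) (hμc : Continuous μ)
    (hεpos : ∀ x, 0 < ε x) (hμpos : ∀ x, 0 < μ x)
    (Ψ : ℝ → ℝ → Matrix (Fin 2) (Fin 2) ℝ)
    (hΨ0 : ∀ E : ℝ, Ψ E 0 = 1)
    (hΨ : ∀ E x : ℝ, ∀ i j, HasDerivAt (fun y => Ψ E y i j)
      ((!![(0 : ℝ), μ x; -E * ε x, 0] * Ψ E x) i j) x)
    (Estar : ℝ)
    (hDirac : Ψ Estar 1 = 1) :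
    ∀ a : ℝ,
      a = 2 * ((∫ x in (0 : ℝ)..1, ε x * Ψ Estar x 0 0 * Ψ Estar x 0 1) ^ 2
        - (∫ x in (0 : ℝ)..1, ε x * (Ψ Estar x 0 0) ^ 2)
          * (∫ x in (0 : ℝ)..1, ε x * (Ψ Estar x 0 1) ^ 2)) →
      (∃ D' : ℝ → ℝ,
        (∀ᶠ E in nhds Estar, HasDerivAt (fun t => (Ψ t 1).trace) (D' E) E) ∧
        HasDerivAt D' a Estar) ∧
      a < 0 := by
  intro a ha
  have hsol : SolvesTransferEquation ε μ Ψ := hΨ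
  refine ⟨⟨fun F => -(Ψ F 1 * variationKernel ε Ψ F F 1).trace,
    .of_forall fun F => hsol.hasDerivAt_trace hΨ0 hεc hμc F, ?_⟩, ?_⟩
  · rw [ha, ← SolvesTransferEquation.trace_variationKernel_sq]
    exact hsol.hasDerivAt_neg_trace_mul_variationKernel hΨ0 hεc hμc hDirac
  · have := sq_integral_mul_lt_mul hεc.continuousOn (fun x _ => hεpos x)
      (hsol.continuous_entry Estar 0 0).continuousOn (hsol.continuous_entry Estar 0 1).continuousOn
      (hsol.row_zero_linearIndependent hΨ0 (hμpos 0).ne' Estar)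
    rw [ha]
    linarith

/-- At a Dirac point with `k = 0` (i.e. `M(E*) = Ψ_{E*}(1) = I`), the
discriminant `D(E) = tr Ψ_E(1)` is twice differentiable at `E*` with
`D''(E*) = 2[(∫₀¹ ε ψ₁ψ₂)² − (∫₀¹ ε ψ₁²)(∫₀¹ ε ψ₂²)] < 0`,
where `ψ_{E*,j}(x) = Ψ_{E*}(x) 0 j` is the first entry of the `j`-th column. -/
theorem discriminant_second_derivative_at_dirac
    (ε μ : ℝ → ℝ)
    (hεc : Continuous ε) (hμc : Continuous μ)
    (hεp : ∀ x, ε (x + 1) = ε x) (hμp : ∀ x, μ (x + 1) = μ x)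
    (hεpos : ∀ x, 0 < ε x) (hμpos : ∀ x, 0 < μ x)
    (Ψ : ℝ → ℝ → Matrix (Fin 2) (Fin 2) ℝ)
    (hΨ0 : ∀ E : ℝ, Ψ E 0 = 1)
    (hΨ : ∀ E x : ℝ, ∀ i j, HasDerivAt (fun y => Ψ E y i j)
      ((!![(0 : ℝ), μ x; -E * ε x, 0] * Ψ E x) i j) x)
    (Estar : ℝ)
    (hDirac : Ψ Estar 1 = 1) :
    ∀ a : ℝ,
      a = 2 * ((∫ x in (0 : ℝ)..1, ε x * Ψ Estar x 0 0 * Ψ Estar x 0 1) ^ 2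
        - (∫ x in (0 : ℝ)..1, ε x * (Ψ Estar x 0 0) ^ 2)
          * (∫ x in (0 : ℝ)..1, ε x * (Ψ Estar x 0 1) ^ 2)) →
      (∃ D' : ℝ → ℝ,
        (∀ᶠ E in nhds Estar, HasDerivAt (fun t => (Ψ t 1).trace) (D' E) E) ∧
        HasDerivAt D' a Estar) ∧
      a < 0 :=
  discriminant_second_derivative_at_dirac_general ε μ hεc hμc hεpos hμpos Ψ hΨ0 hΨ Estar hDirac
end

section
/- Let u, v : [0,1] → ℝ² be continuous and let W, F : [0,1] → M₂(ℝ) be continuous with W(x) and F(x) symmetric positive semidefinite for every x ∈ [0,1]. Define a₁ = 2·[ (∫₀¹ uᵀWv)² − (∫₀¹ uᵀWu)·(∫₀¹ vᵀWv) ], a₃ = 2·[ (∫₀¹ uᵀFv)² − (∫₀¹ uᵀFu)·(∫₀¹ vᵀFv) ], and a₂ = 2·(∫₀¹ uᵀWv)·(∫₀¹ uᵀFv) − (∫₀¹ vᵀWv)·(∫₀¹ uᵀFu) − (∫₀¹ uᵀWu)·(∫₀¹ vᵀFv). Then a₂² − a₁·a₃ ≥ 0. -/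
open Matrix

/-! With `G_W`, `G_F` the Gram matrices of `u, v` for the forms `(a, b) ↦ ∫₀¹ aᵀWb` and
`(a, b) ↦ ∫₀¹ aᵀFb`, the quantity `a₂² − a₁a₃` is the discriminant of the quadratic
`t ↦ det (G_W − t G_F)`. By Cauchy–Schwarz `G_F` is positive semidefinite, and then this quadratic
has a real root: where the top-left entry of `G_W − t G_F` vanishes, its determinant is `≤ 0`. -/

open MeasureTheory Set

lemma discrim_det_sub_smul_nonneg {P Q R p q r : ℝ} (h : p ^ 2 ≤ q * r) :
    0 ≤ discrim (q * r - p ^ 2) (2 * P * p - R * q - Q * r) (Q * R - P ^ 2) := by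
  rw [discrim]
  rcases eq_or_ne q 0 with rfl | hq
  · obtain rfl : p = 0 := by nlinarith
    nlinarith
  -- The coefficients are those of `det (!![Q, P; P, R] − t • !![q, p; p, r])`; complete the square
  -- at `t = Q / q`, where `q²` times this determinant is `−(qP − Qp)²`.
  have key : q ^ 2 * ((2 * P * p - R * q - Q * r) ^ 2 - 4 * (q * r - p ^ 2) * (Q * R - P ^ 2)) =
      (2 * (q * r - p ^ 2) * Q - (Q * r + R * q - 2 * P * p) * q) ^ 2
        + 4 * (q * r - p ^ 2) * (q * P - Q * p) ^ 2 := by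
    ring
  refine (mul_nonneg_iff_of_pos_left (c := q ^ 2) (by positivity)).1 ?_
  have := sub_nonneg.2 h
  rw [key]
  positivity

namespace Matrix

variable {n : Type*} [Fintype n]

lemma IsSymm.dotProduct_mulVec_add_smul {R : Type*} [CommRing R] {M : Matrix n n R}
    (hM : M.IsSymm) (a b : n → R) (t : R) :
    (a + t • b) ⬝ᵥ M *ᵥ (a + t • b) =
      (b ⬝ᵥ M *ᵥ b) * (t * t) + 2 * (a ⬝ᵥ M *ᵥ b) * t + a ⬝ᵥ M *ᵥ a := by
  have hba : b ⬝ᵥ M *ᵥ a = a ⬝ᵥ M *ᵥ b := by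
    rw [← dotProduct_transpose_mulVec, hM.eq]
  simp only [mulVec_add, mulVec_smul, add_dotProduct, dotProduct_add, smul_dotProduct,
    dotProduct_smul, smul_eq_mul, hba]
  ring

variable {α : Type*} [MeasurableSpace α] {μ : Measure α} {M : α → Matrix n n ℝ} {a b : α → n → ℝ}

theorem integral_dotProduct_mulVec_sq_le (hM : ∀ᵐ x ∂μ, (M x).PosSemidef)
    (haa : Integrable (fun x ↦ a x ⬝ᵥ M x *ᵥ a x) μ)
    (hab : Integrable (fun x ↦ a x ⬝ᵥ M x *ᵥ b x) μ)
    (hbb : Integrable (fun x ↦ b x ⬝ᵥ M x *ᵥ b x) μ) :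
    (∫ x, a x ⬝ᵥ M x *ᵥ b x ∂μ) ^ 2 ≤
      (∫ x, a x ⬝ᵥ M x *ᵥ a x ∂μ) * ∫ x, b x ⬝ᵥ M x *ᵥ b x ∂μ := by
  have hquad : ∀ t : ℝ, 0 ≤ (∫ x, b x ⬝ᵥ M x *ᵥ b x ∂μ) * (t * t)
      + 2 * (∫ x, a x ⬝ᵥ M x *ᵥ b x ∂μ) * t + ∫ x, a x ⬝ᵥ M x *ᵥ a x ∂μ := by
    intro t
    calc 0 ≤ ∫ x, (a x + t • b x) ⬝ᵥ M x *ᵥ (a x + t • b x) ∂μ :=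
          integral_nonneg_of_ae <| hM.mono fun x hx ↦ by
            simpa using hx.dotProduct_mulVec_nonneg (a x + t • b x)
      _ = ∫ x, (b x ⬝ᵥ M x *ᵥ b x) * (t * t) + 2 * (a x ⬝ᵥ M x *ᵥ b x) * t
            + a x ⬝ᵥ M x *ᵥ a x ∂μ :=
          integral_congr_ae <| hM.mono fun x hx ↦
            (isHermitian_iff_isSymm.1 hx.1).dotProduct_mulVec_add_smul (a x) (b x) t
      _ = _ := by
          rw [integral_add _ haa, integral_add (hbb.mul_const _) ((hab.const_mul 2).mul_const t),
            integral_mul_const, integral_mul_const, integral_const_mul]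
          exact (hbb.mul_const _).add ((hab.const_mul 2).mul_const t)
  have := discrim_le_zero hquad
  rw [discrim] at this
  linarith

theorem intervalIntegral_dotProduct_mulVec_sq_le {M : ℝ → Matrix n n ℝ} {a b : ℝ → n → ℝ}
    {s t : ℝ} (hst : s ≤ t) (ha : ContinuousOn a (Icc s t)) (hb : ContinuousOn b (Icc s t))
    (hM : ContinuousOn M (Icc s t)) (hMpsd : ∀ x ∈ Icc s t, (M x).PosSemidef) :
    (∫ x in s..t, a x ⬝ᵥ M x *ᵥ b x) ^ 2 ≤
      (∫ x in s..t, a x ⬝ᵥ M x *ᵥ a x) * ∫ x in s..t, b x ⬝ᵥ M x *ᵥ b x := by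
  have hint : ∀ c d : ℝ → n → ℝ, ContinuousOn c (Icc s t) → ContinuousOn d (Icc s t) →
      IntegrableOn (fun x ↦ c x ⬝ᵥ M x *ᵥ d x) (Ioc s t) := fun c d hc hd ↦
    (continuousOn_iff_continuous_domRestrict.2 <| hc.domRestrict.dotProduct
      (hM.domRestrict.matrix_mulVec hd.domRestrict)).integrableOn_Icc.mono_set Ioc_subset_Icc_self
  simp only [intervalIntegral.integral_of_le hst]
  exact integral_dotProduct_mulVec_sq_le
    (ae_restrict_of_forall_mem measurableSet_Ioc fun x hx ↦ hMpsd x (Ioc_subset_Icc_self hx))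
    (hint a a ha ha) (hint a b ha hb) (hint b b hb hb)

end Matrix

theorem perturbation_discriminant_nonneg_general
    (u v : ℝ → Fin 2 → ℝ)
    (W F : ℝ → Matrix (Fin 2) (Fin 2) ℝ)
    (hu : ContinuousOn u (Set.Icc 0 1)) (hv : ContinuousOn v (Set.Icc 0 1))
    (hF : ContinuousOn F (Set.Icc 0 1))
    (hFpsd : ∀ x ∈ Set.Icc (0 : ℝ) 1, (F x).PosSemidef)
    (a₁ a₂ a₃ : ℝ)
    (ha₁ : a₁ = 2 * ((∫ x in (0 : ℝ)..1, u x ⬝ᵥ (W x).mulVec (v x)) ^ 2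
      - (∫ x in (0 : ℝ)..1, u x ⬝ᵥ (W x).mulVec (u x))
        * (∫ x in (0 : ℝ)..1, v x ⬝ᵥ (W x).mulVec (v x))))
    (ha₃ : a₃ = 2 * ((∫ x in (0 : ℝ)..1, u x ⬝ᵥ (F x).mulVec (v x)) ^ 2
      - (∫ x in (0 : ℝ)..1, u x ⬝ᵥ (F x).mulVec (u x))
        * (∫ x in (0 : ℝ)..1, v x ⬝ᵥ (F x).mulVec (v x))))
    (ha₂ : a₂ = 2 * (∫ x in (0 : ℝ)..1, u x ⬝ᵥ (W x).mulVec (v x))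
        * (∫ x in (0 : ℝ)..1, u x ⬝ᵥ (F x).mulVec (v x))
      - (∫ x in (0 : ℝ)..1, v x ⬝ᵥ (W x).mulVec (v x))
        * (∫ x in (0 : ℝ)..1, u x ⬝ᵥ (F x).mulVec (u x))
      - (∫ x in (0 : ℝ)..1, u x ⬝ᵥ (W x).mulVec (u x))
        * (∫ x in (0 : ℝ)..1, v x ⬝ᵥ (F x).mulVec (v x))) :
    a₂ ^ 2 - a₁ * a₃ ≥ 0 := by
  have hGF := intervalIntegral_dotProduct_mulVec_sq_le zero_le_one hu hv hF hFpsd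
  have hdiscrim := discrim_det_sub_smul_nonneg (P := ∫ x in (0 : ℝ)..1, u x ⬝ᵥ (W x).mulVec (v x))
    (Q := ∫ x in (0 : ℝ)..1, u x ⬝ᵥ (W x).mulVec (u x))
    (R := ∫ x in (0 : ℝ)..1, v x ⬝ᵥ (W x).mulVec (v x)) hGF
  rw [discrim] at hdiscrim
  rw [ha₁, ha₂, ha₃]
  linarith

/-- Discriminant inequality `a₂² − a₁a₃ ≥ 0` for the quadratic-form
coefficients built from positive semidefinite weight matrices `W` and `F`. -/
theorem perturbation_discriminant_nonneg
    (u v : ℝ → Fin 2 → ℝ)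
    (W F : ℝ → Matrix (Fin 2) (Fin 2) ℝ)
    (hu : ContinuousOn u (Set.Icc 0 1)) (hv : ContinuousOn v (Set.Icc 0 1))
    (hW : ContinuousOn W (Set.Icc 0 1)) (hF : ContinuousOn F (Set.Icc 0 1))
    (hWpsd : ∀ x ∈ Set.Icc (0 : ℝ) 1, (W x).PosSemidef)
    (hFpsd : ∀ x ∈ Set.Icc (0 : ℝ) 1, (F x).PosSemidef)
    (a₁ a₂ a₃ : ℝ)
    (ha₁ : a₁ = 2 * ((∫ x in (0 : ℝ)..1, u x ⬝ᵥ (W x).mulVec (v x)) ^ 2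
      - (∫ x in (0 : ℝ)..1, u x ⬝ᵥ (W x).mulVec (u x))
        * (∫ x in (0 : ℝ)..1, v x ⬝ᵥ (W x).mulVec (v x))))
    (ha₃ : a₃ = 2 * ((∫ x in (0 : ℝ)..1, u x ⬝ᵥ (F x).mulVec (v x)) ^ 2
      - (∫ x in (0 : ℝ)..1, u x ⬝ᵥ (F x).mulVec (u x))
        * (∫ x in (0 : ℝ)..1, v x ⬝ᵥ (F x).mulVec (v x))))
    (ha₂ : a₂ = 2 * (∫ x in (0 : ℝ)..1, u x ⬝ᵥ (W x).mulVec (v x))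
        * (∫ x in (0 : ℝ)..1, u x ⬝ᵥ (F x).mulVec (v x))
      - (∫ x in (0 : ℝ)..1, v x ⬝ᵥ (W x).mulVec (v x))
        * (∫ x in (0 : ℝ)..1, u x ⬝ᵥ (F x).mulVec (u x))
      - (∫ x in (0 : ℝ)..1, u x ⬝ᵥ (W x).mulVec (u x))
        * (∫ x in (0 : ℝ)..1, v x ⬝ᵥ (F x).mulVec (v x))) :
    a₂ ^ 2 - a₁ * a₃ ≥ 0 :=
  perturbation_discriminant_nonneg_general u v W F hu hv hF hFpsd a₁ a₂ a₃ ha₁ ha₃ ha₂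
end

section
/- Assume in addition the inversion symmetry ε(x) = ε(1−x) and μ(x) = μ(1−x) for all x ∈ ℝ. Let E ∈ ℝ with |D(E)| > 2 (E lies in a spectral band gap). Then ψ_{E,2}(1) ≠ 0, and for every eigenvalue λ ∈ ℂ of M(E) one has λ ≠ ψ_{E,1}(1); in particular λ_{E,1} − ψ_{E,1}(1) ≠ 0 and λ_{E,2} − ψ_{E,1}(1) ≠ 0 where λ_{E,1}, λ_{E,2} are the two eigenvalues of M(E). -/
open Matrix

/-!
Under the inversion symmetry the monodromy matrix has equal diagonal entries, `M = !![a, b; c, a]`: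
the pairing `Ψ(1-y)₁₁ Ψ(y)₀₀ + Ψ(1-y)₀₁ Ψ(y)₁₀` is constant in `y` and equals `Ψ(1)₁₁` at `y = 0`
and `Ψ(1)₀₀` at `y = 1`. Since the system is traceless, `det M = a² - bc = 1`, and in a gap
`|tr M| = 2|a| > 2`, so `bc = a² - 1 ≠ 0`. Hence `b ≠ 0`, and `a` is no eigenvalue because the
characteristic polynomial of `M` takes the value `-bc` at `a`.
-/

lemma Matrix.eval_charpoly_fin_two_apply_zero_zero {R : Type*} [CommRing R]
    (M : Matrix (Fin 2) (Fin 2) R) : M.charpoly.eval (M 0 0) = -(M 0 1 * M 1 0) := by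
  simp [Matrix.charpoly, det_fin_two]

lemma Matrix.mul_offDiag_ne_zero_of_det_eq_one {M : Matrix (Fin 2) (Fin 2) ℝ}
    (hdet : M.det = 1) (hdiag : M 0 0 = M 1 1) (htr : |M.trace| ≠ 2) :
    M 0 1 * M 1 0 ≠ 0 := by
  intro hbc
  rw [det_fin_two, ← hdiag] at hdet
  have hsq : M 0 0 ^ 2 = 1 := by linear_combination hdet + hbc
  have habs : |M 0 0| = 1 :=
    (pow_eq_one_iff_of_nonneg (abs_nonneg _) two_ne_zero).mp (by rwa [sq_abs])
  apply htr
  rw [trace_fin_two, ← hdiag, ← two_mul, abs_mul, abs_two, habs, mul_one]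

section LinearSystem

variable {A Ψ : ℝ → Matrix (Fin 2) (Fin 2) ℝ}

lemma hasDerivAt_fundamental_apply
    (hΨ : ∀ x, ∀ i j, HasDerivAt (fun y => Ψ y i j) ((A x * Ψ x) i j) x) (x : ℝ) (i j : Fin 2) :
    HasDerivAt (fun y => Ψ y i j) (A x i 0 * Ψ x 0 j + A x i 1 * Ψ x 1 j) x := by
  simpa [mul_apply, Fin.sum_univ_two] using hΨ x i j

lemma hasDerivAt_det_fundamental
    (hΨ : ∀ x, ∀ i j, HasDerivAt (fun y => Ψ y i j) ((A x * Ψ x) i j) x) (x : ℝ) :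
    HasDerivAt (fun y => (Ψ y).det) ((A x).trace * (Ψ x).det) x := by
  have h := hasDerivAt_fundamental_apply hΨ x
  simp only [det_fin_two]
  refine (((h 0 0).mul (h 1 1)).sub ((h 0 1).mul (h 1 0))).congr_deriv ?_
  rw [trace_fin_two]
  ring

lemma det_fundamental_eq_one
    (hΨ : ∀ x, ∀ i j, HasDerivAt (fun y => Ψ y i j) ((A x * Ψ x) i j) x)
    (htr : ∀ x, (A x).trace = 0) (hΨ0 : Ψ 0 = 1) (x : ℝ) : (Ψ x).det = 1 := by
  have hderiv (y : ℝ) : HasDerivAt (fun y => (Ψ y).det) 0 y := by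
    simpa [htr] using hasDerivAt_det_fundamental hΨ y
  simpa [hΨ0] using is_const_of_deriv_eq_zero (fun y => (hderiv y).differentiableAt)
    (fun y => (hderiv y).deriv) x 0

end LinearSystem

lemma diag_fundamental_eq_of_reflection {p q : ℝ → ℝ} {Ψ : ℝ → Matrix (Fin 2) (Fin 2) ℝ}
    (hΨ : ∀ x, ∀ i j, HasDerivAt (fun y => Ψ y i j) ((!![0, p x; q x, 0] * Ψ x) i j) x)
    (hp : ∀ x, p x = p (1 - x)) (hq : ∀ x, q x = q (1 - x)) (hΨ0 : Ψ 0 = 1) :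
    Ψ 1 0 0 = Ψ 1 1 1 := by
  have h := hasDerivAt_fundamental_apply hΨ
  have hpair (x : ℝ) : HasDerivAt
      (fun y => Ψ (1 - y) 1 1 * Ψ y 0 0 + Ψ (1 - y) 0 1 * Ψ y 1 0) 0 x := by
    have hrefl : HasDerivAt (fun y : ℝ => 1 - y) (-1) x := by
      simpa using (hasDerivAt_id x).const_sub 1
    refine ((((h (1 - x) 1 1).comp x hrefl).mul (h x 0 0)).add
      (((h (1 - x) 0 1).comp x hrefl).mul (h x 1 0))).congr_deriv ?_
    simp only [Function.comp_apply, of_apply, cons_val', cons_val_zero, cons_val_one, empty_val',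
      cons_val_fin_one]
    rw [← hp x, ← hq x]
    ring
  simpa [hΨ0] using is_const_of_deriv_eq_zero (fun y => (hpair y).differentiableAt)
    (fun y => (hpair y).deriv) 1 0

theorem gap_monodromy_entries_nonzero_general
    (ε μ : ℝ → ℝ)
    (hεsym : ∀ x, ε x = ε (1 - x)) (hμsym : ∀ x, μ x = μ (1 - x))
    (E : ℝ)
    (Ψ : ℝ → Matrix (Fin 2) (Fin 2) ℝ)
    (hΨ0 : Ψ 0 = 1)
    (hΨ : ∀ x, ∀ i j, HasDerivAt (fun y => Ψ y i j)
      ((!![(0 : ℝ), μ x; -E * ε x, 0] * Ψ x) i j) x)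
    (hgap : |(Ψ 1).trace| > 2) :
    Ψ 1 0 1 ≠ 0 ∧
    ∀ l : ℂ, (((Ψ 1).map ((↑·) : ℝ → ℂ)).charpoly.IsRoot l → l ≠ (Ψ 1 0 0 : ℂ)) := by
  have hdet : (Ψ 1).det = 1 :=
    det_fundamental_eq_one hΨ (fun x => by simp [trace_fin_two]) hΨ0 1
  have hdiag : Ψ 1 0 0 = Ψ 1 1 1 :=
    diag_fundamental_eq_of_reflection (q := fun x => -E * ε x) hΨ hμsym
      (fun x => by rw [hεsym x]) hΨ0
  have hbc := (Ψ 1).mul_offDiag_ne_zero_of_det_eq_one hdet hdiag hgap.ne'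
  refine ⟨left_ne_zero_of_mul hbc, fun l hl hla => hbc ?_⟩
  have heval := ((Ψ 1).map ((↑·) : ℝ → ℂ)).eval_charpoly_fin_two_apply_zero_zero
  simp only [map_apply] at heval
  rw [← hla, hl.eq_zero, eq_comm, neg_eq_zero] at heval
  exact_mod_cast heval

/-- For an inversion-symmetric structure and `E` in a spectral band gap
(`|D(E)| > 2`), the entry `ψ_{E,2}(1) = Ψ_E(1) 0 1` is nonzero and no
eigenvalue of `M(E)` equals `ψ_{E,1}(1) = Ψ_E(1) 0 0`. -/
theorem gap_monodromy_entries_nonzero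
    (ε μ : ℝ → ℝ)
    (hεc : Continuous ε) (hμc : Continuous μ)
    (hεp : ∀ x, ε (x + 1) = ε x) (hμp : ∀ x, μ (x + 1) = μ x)
    (hεpos : ∀ x, 0 < ε x) (hμpos : ∀ x, 0 < μ x)
    (hεsym : ∀ x, ε x = ε (1 - x)) (hμsym : ∀ x, μ x = μ (1 - x))
    (E : ℝ)
    (Ψ : ℝ → Matrix (Fin 2) (Fin 2) ℝ)
    (hΨ0 : Ψ 0 = 1)
    (hΨ : ∀ x, ∀ i j, HasDerivAt (fun y => Ψ y i j)
      ((!![(0 : ℝ), μ x; -E * ε x, 0] * Ψ x) i j) x)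
    (hgap : |(Ψ 1).trace| > 2) :
    Ψ 1 0 1 ≠ 0 ∧
    ∀ l : ℂ, (((Ψ 1).map ((↑·) : ℝ → ℂ)).charpoly.IsRoot l → l ≠ (Ψ 1 0 0 : ℂ)) :=
  gap_monodromy_entries_nonzero_general ε μ hεsym hμsym E Ψ hΨ0 hΨ hgap
end

section
/- Let ε, μ : [0,1] → ℝ be continuous with μ(x) > 0 and ε(x) > 0 for all x, and let E ∈ ℝ. Suppose u, p, φ, q : [0,1] → ℝ are differentiable and satisfy u'(x) = μ(x)·p(x), p'(x) = −E·ε(x)·u(x), φ'(x) = μ(x)·q(x), q'(x) = −E·ε(x)·φ(x) − ε(x)·u(x) for all x ∈ [0,1], with u(0) = 0, φ(0) = 0, q(0) = 0, and u(1) = 0. Then p(1)·φ(1) = ∫₀¹ ε(x)·u(x)² dx. In particular, if u is not identically zero, then p(1)·φ(1) > 0, so both p(1) ≠ 0 and φ(1) ≠ 0. -/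
/-!
The Wronskian-type quantity `W = p φ - u q` has derivative `ε u²`: the `μ`-terms cancel and
so do the `E`-terms. Integrating over `[0, 1]` and using `u(0) = u(1) = φ(0) = q(0) = 0` gives
`p(1) φ(1) = ∫₀¹ ε u²`. If `u` is not identically zero, it is nonzero at an interior point, where
the continuous nonnegative integrand is positive, so the integral is positive.
-/

open Set MeasureTheory

theorem hasDerivAt_flux_wronskian {u p φ q : ℝ → ℝ} {x m e E : ℝ}
    (hu : HasDerivAt u (m * p x) x) (hp : HasDerivAt p (-E * e * u x) x)
    (hφ : HasDerivAt φ (m * q x) x) (hq : HasDerivAt q (-E * e * φ x - e * u x) x) :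
    HasDerivAt (fun y => p y * φ y - u y * q y) (e * u x ^ 2) x :=
  ((hp.mul hφ).sub (hu.mul hq)).congr_deriv (by ring)

theorem integral_mul_sq_eq_flux_wronskian_sub {ε μ u p φ q : ℝ → ℝ} {a b E : ℝ} (hab : a ≤ b)
    (hεc : ContinuousOn ε (Icc a b))
    (hu : ∀ x ∈ Icc a b, HasDerivAt u (μ x * p x) x)
    (hp : ∀ x ∈ Icc a b, HasDerivAt p (-E * ε x * u x) x)
    (hφ : ∀ x ∈ Icc a b, HasDerivAt φ (μ x * q x) x)
    (hq : ∀ x ∈ Icc a b, HasDerivAt q (-E * ε x * φ x - ε x * u x) x) :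
    ∫ x in a..b, ε x * u x ^ 2 = (p b * φ b - u b * q b) - (p a * φ a - u a * q a) := by
  rw [← uIcc_of_le hab] at hεc hu hp hφ hq
  refine intervalIntegral.integral_eq_sub_of_hasDerivAt
    (fun x hx => hasDerivAt_flux_wronskian (hu x hx) (hp x hx) (hφ x hx) (hq x hx)) ?_
  exact (hεc.mul ((HasDerivAt.continuousOn hu).pow 2)).intervalIntegrable

theorem intervalIntegral_pos_of_continuousOn_of_nonneg {f : ℝ → ℝ} {a b x : ℝ}
    (hf : ContinuousOn f (Icc a b)) (hf₀ : ∀ y ∈ Icc a b, 0 ≤ f y)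
    (hx : x ∈ Ioo a b) (hfx : f x ≠ 0) : 0 < ∫ y in a..b, f y := by
  have hab : a < b := hx.1.trans hx.2
  have hfi : IntervalIntegrable f volume a b :=
    (hf.mono (uIcc_of_le hab.le).subset).intervalIntegrable
  have hf₀' : 0 ≤ᵐ[volume.restrict (uIoc a b)] f := by
    rw [uIoc_of_le hab.le]
    exact ae_restrict_of_forall_mem measurableSet_Ioc
      fun y hy => hf₀ y (Ioc_subset_Icc_self hy)
  have hopen : IsOpen (Ioo a b ∩ f ⁻¹' {0}ᶜ) :=
    (hf.mono Ioo_subset_Icc_self).isOpen_inter_preimage isOpen_Ioo isOpen_compl_singleton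
  refine (intervalIntegral.integral_pos_iff_support_of_nonneg_ae' hf₀' hfi).2 ⟨hab, ?_⟩
  calc (0 : ENNReal) < volume (Ioo a b ∩ f ⁻¹' {0}ᶜ) :=
        hopen.measure_pos _ ⟨x, hx, hfx⟩
    _ ≤ volume (Function.support f ∩ Ioc a b) :=
        measure_mono fun y hy => ⟨hy.2, Ioo_subset_Ioc_self hy.1⟩

theorem dirichlet_flux_derivative_identity_general
    (ε μ : ℝ → ℝ)
    (hεc : ContinuousOn ε (Set.Icc 0 1))
    (hεpos : ∀ x ∈ Set.Icc (0 : ℝ) 1, 0 < ε x)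
    (E : ℝ)
    (u p φ q : ℝ → ℝ)
    (hu : ∀ x ∈ Set.Icc (0 : ℝ) 1, HasDerivAt u (μ x * p x) x)
    (hp : ∀ x ∈ Set.Icc (0 : ℝ) 1, HasDerivAt p (-E * ε x * u x) x)
    (hφ : ∀ x ∈ Set.Icc (0 : ℝ) 1, HasDerivAt φ (μ x * q x) x)
    (hq : ∀ x ∈ Set.Icc (0 : ℝ) 1,
      HasDerivAt q (-E * ε x * φ x - ε x * u x) x)
    (hu0 : u 0 = 0) (hφ0 : φ 0 = 0) (hq0 : q 0 = 0) (hu1 : u 1 = 0) :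
    p 1 * φ 1 = ∫ x in (0 : ℝ)..1, ε x * u x ^ 2 ∧
    ((∃ x ∈ Set.Icc (0 : ℝ) 1, u x ≠ 0) →
      0 < p 1 * φ 1 ∧ p 1 ≠ 0 ∧ φ 1 ≠ 0) := by
  have hflux : p 1 * φ 1 = ∫ x in (0 : ℝ)..1, ε x * u x ^ 2 := by
    rw [integral_mul_sq_eq_flux_wronskian_sub zero_le_one hεc hu hp hφ hq, hu0, hφ0, hq0, hu1]
    ring
  refine ⟨hflux, ?_⟩
  rintro ⟨x, ⟨hx0, hx1⟩, hux⟩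
  have hx : x ∈ Ioo (0 : ℝ) 1 :=
    ⟨hx0.lt_of_ne (by rintro rfl; exact hux hu0), hx1.lt_of_ne (by rintro rfl; exact hux hu1)⟩
  have hpos : 0 < p 1 * φ 1 := hflux ▸ intervalIntegral_pos_of_continuousOn_of_nonneg
    (hεc.mul ((HasDerivAt.continuousOn hu).pow 2))
    (fun y hy => mul_nonneg (hεpos y hy).le (sq_nonneg _))
    hx (mul_ne_zero (hεpos x (Ioo_subset_Icc_self hx)).ne' (pow_ne_zero 2 hux))
  exact ⟨hpos, left_ne_zero_of_mul hpos.ne', right_ne_zero_of_mul hpos.ne'⟩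

/-- Flux–derivative identity: for a Dirichlet solution `u` of the photonic
equation on `[0,1]` with `u(1) = 0`, and `(φ, q)` the derivative of the
solution with respect to `E`, one has `p(1)·φ(1) = ∫₀¹ ε u²`; in particular if
`u ≢ 0` then `p(1)·φ(1) > 0`, so `p(1) ≠ 0` and `φ(1) ≠ 0`. -/
theorem dirichlet_flux_derivative_identity
    (ε μ : ℝ → ℝ)
    (hεc : ContinuousOn ε (Set.Icc 0 1)) (hμc : ContinuousOn μ (Set.Icc 0 1))
    (hεpos : ∀ x ∈ Set.Icc (0 : ℝ) 1, 0 < ε x)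
    (hμpos : ∀ x ∈ Set.Icc (0 : ℝ) 1, 0 < μ x)
    (E : ℝ)
    (u p φ q : ℝ → ℝ)
    (hu : ∀ x ∈ Set.Icc (0 : ℝ) 1, HasDerivAt u (μ x * p x) x)
    (hp : ∀ x ∈ Set.Icc (0 : ℝ) 1, HasDerivAt p (-E * ε x * u x) x)
    (hφ : ∀ x ∈ Set.Icc (0 : ℝ) 1, HasDerivAt φ (μ x * q x) x)
    (hq : ∀ x ∈ Set.Icc (0 : ℝ) 1,
      HasDerivAt q (-E * ε x * φ x - ε x * u x) x)
    (hu0 : u 0 = 0) (hφ0 : φ 0 = 0) (hq0 : q 0 = 0) (hu1 : u 1 = 0) :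
    p 1 * φ 1 = ∫ x in (0 : ℝ)..1, ε x * u x ^ 2 ∧
    ((∃ x ∈ Set.Icc (0 : ℝ) 1, u x ≠ 0) →
      0 < p 1 * φ 1 ∧ p 1 ≠ 0 ∧ φ 1 ≠ 0) :=
  dirichlet_flux_derivative_identity_general ε μ hεc hεpos E u p φ q hu hp hφ hq hu0 hφ0 hq0 hu1
end

section
/- Let N₁ < N₂ be real numbers, let ε, μ : [N₁, N₂] → ℝ be continuous with ε(x) > 0 and μ(x) > 0 for all x, and let ω ∈ ℂ with ω ≠ 0. Suppose ψ, F : [N₁, N₂] → ℂ are differentiable and satisfy ψ'(x) = μ(x)·F(x) and F'(x) = −ω²·ε(x)·ψ(x) for all x ∈ [N₁, N₂], together with the outgoing boundary conditions F(N₁) + i·ω·ψ(N₁) = 0 and F(N₂) − i·ω·ψ(N₂) = 0. If ψ is not identically zero on [N₁, N₂], then Im ω < 0. -/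
/-!
Multiplying `F' = -ω² ε ψ` by `conj ψ` and integrating by parts gives the energy identity
`conj ψ F |_{N₁}^{N₂} = ∫ μ |F|² - ω² ∫ ε |ψ|²`, and the outgoing boundary conditions turn the
left side into `i ω (|ψ N₁|² + |ψ N₂|²)`. Comparing real and imaginary parts, `Im ω ≥ 0` forces
`ψ N₁ = ψ N₂ = 0`, hence also `F N₁ = 0`, and uniqueness for the linear system (Grönwall) makes
`ψ` vanish identically.
-/

open Set intervalIntegral Complex ComplexConjugate

section LinearSystem

variable {a b : ℝ} {p q ψ F : ℝ → ℂ}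

theorem eq_zero_of_hasDerivAt_system_of_eq_zero_left (hp : ContinuousOn p (Icc a b))
    (hq : ContinuousOn q (Icc a b))
    (hψ : ∀ x ∈ Icc a b, HasDerivAt ψ (p x * F x) x)
    (hF : ∀ x ∈ Icc a b, HasDerivAt F (q x * ψ x) x)
    (hψa : ψ a = 0) (hFa : F a = 0) :
    ∀ x ∈ Icc a b, ψ x = 0 := by
  obtain ⟨C₁, hC₁⟩ := isCompact_Icc.exists_bound_of_continuousOn hp
  obtain ⟨C₂, hC₂⟩ := isCompact_Icc.exists_bound_of_continuousOn hq
  have hcont : ContinuousOn (fun t => (ψ t, F t)) (Icc a b) := fun x hx =>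
    ((hψ x hx).continuousAt.prodMk (hF x hx).continuousAt).continuousWithinAt
  have hderiv : ∀ t ∈ Ico a b,
      HasDerivWithinAt (fun t => (ψ t, F t)) (p t * F t, q t * ψ t) (Ici t) t := fun t ht =>
    ((hψ t (Ico_subset_Icc_self ht)).prodMk (hF t (Ico_subset_Icc_self ht))).hasDerivWithinAt
  have hbound : ∀ t ∈ Ico a b, ‖(p t * F t, q t * ψ t)‖ ≤ max C₁ C₂ * ‖(ψ t, F t)‖ := by
    intro t ht
    have hp_le : ‖p t‖ ≤ max C₁ C₂ := (hC₁ t (Ico_subset_Icc_self ht)).trans (le_max_left _ _)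
    have hq_le : ‖q t‖ ≤ max C₁ C₂ := (hC₂ t (Ico_subset_Icc_self ht)).trans (le_max_right _ _)
    have hK : 0 ≤ max C₁ C₂ := (norm_nonneg _).trans hp_le
    rw [Prod.norm_def, norm_mul, norm_mul]
    exact max_le (mul_le_mul hp_le (norm_snd_le (ψ t, F t)) (norm_nonneg _) hK)
      (mul_le_mul hq_le (norm_fst_le (ψ t, F t)) (norm_nonneg _) hK)
  intro x hx
  exact congrArg Prod.fst <|
    eq_zero_of_abs_deriv_le_mul_abs_self_of_eq_zero_right hcont hderiv
      (by simp [hψa, hFa]) hbound x hx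

end LinearSystem

section Energy

variable {a b : ℝ} {ε μ : ℝ → ℝ} {ω : ℂ} {ψ F : ℝ → ℂ}

theorem hasDerivAt_conj_mul {x : ℝ} (hψ : HasDerivAt ψ ((μ x : ℂ) * F x) x)
    (hF : HasDerivAt F (-ω ^ 2 * (ε x : ℂ) * ψ x) x) :
    HasDerivAt (fun y => conj (ψ y) * F y)
      (↑(μ x * normSq (F x)) - ω ^ 2 * ↑(ε x * normSq (ψ x))) x := by
  refine (hψ.star.mul hF).congr_deriv ?_
  simp only [star_def, map_mul, conj_ofReal]
  push_cast
  linear_combination (μ x : ℂ) * mul_conj (F x) - ω ^ 2 * (ε x : ℂ) * mul_conj (ψ x)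

theorem conj_mul_sub_conj_mul_eq_integral (hab : a ≤ b)
    (hεc : ContinuousOn ε (Icc a b)) (hμc : ContinuousOn μ (Icc a b))
    (hψ : ∀ x ∈ Icc a b, HasDerivAt ψ ((μ x : ℂ) * F x) x)
    (hF : ∀ x ∈ Icc a b, HasDerivAt F (-ω ^ 2 * (ε x : ℂ) * ψ x) x) :
    conj (ψ b) * F b - conj (ψ a) * F a =
      ↑(∫ x in a..b, μ x * normSq (F x)) - ω ^ 2 * ↑(∫ x in a..b, ε x * normSq (ψ x)) := by
  have hψc : ContinuousOn ψ (Icc a b) := fun x hx => (hψ x hx).continuousAt.continuousWithinAt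
  have hFc : ContinuousOn F (Icc a b) := fun x hx => (hF x hx).continuousAt.continuousWithinAt
  have hP : IntervalIntegrable (fun x => ((μ x * normSq (F x) : ℝ) : ℂ)) MeasureTheory.volume a b :=
    (continuous_ofReal.comp_continuousOn
      (hμc.mul (continuous_normSq.comp_continuousOn hFc))).intervalIntegrable_of_Icc hab
  have hQ : IntervalIntegrable (fun x => ω ^ 2 * ((ε x * normSq (ψ x) : ℝ) : ℂ))
      MeasureTheory.volume a b :=
    (continuousOn_const.mul (continuous_ofReal.comp_continuousOn
      (hεc.mul (continuous_normSq.comp_continuousOn hψc)))).intervalIntegrable_of_Icc hab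
  rw [← integral_ofReal, ← integral_ofReal, ← integral_const_mul, ← integral_sub hP hQ]
  refine (integral_eq_sub_of_hasDerivAt (f := fun y => conj (ψ y) * F y) (fun x hx => ?_) (hP.sub hQ)).symm
  rw [uIcc_of_le hab] at hx
  exact hasDerivAt_conj_mul (hψ x hx) (hF x hx)

end Energy

theorem eq_zero_of_I_mul_eq_sub_sq_mul {ω : ℂ} (hω : ω ≠ 0) (him : 0 ≤ ω.im) {B M E : ℝ}
    (hB : 0 ≤ B) (hM : 0 ≤ M) (hE : 0 < E) (h : I * ω * B = M - ω ^ 2 * E) : B = 0 := by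
  have h_re := congrArg Complex.re h
  have h_im := congrArg Complex.im h
  simp only [mul_re, mul_im, I_re, I_im, ofReal_re, ofReal_im, sub_re, sub_im, pow_two]
    at h_re h_im
  by_cases hre_zero : ω.re = 0
  · have him_pos : 0 < ω.im := him.lt_of_ne fun h0 => hω (Complex.ext hre_zero h0.symm)
    rw [hre_zero] at h_re
    nlinarith [mul_nonneg him hB, mul_pos (mul_pos him_pos him_pos) hE]
  · have hsum : B + 2 * ω.im * E = 0 :=
      (mul_eq_zero.mp (by linear_combination h_im : ω.re * (B + 2 * ω.im * E) = 0)).resolve_left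
        hre_zero
    nlinarith [mul_nonneg him hE.le]

/-- A nonzero resonance of the finite photonic structure with outgoing
boundary conditions has negative imaginary part. -/
theorem resonance_negative_imaginary_part
    (N₁ N₂ : ℝ) (hN : N₁ < N₂)
    (ε μ : ℝ → ℝ)
    (hεc : ContinuousOn ε (Set.Icc N₁ N₂)) (hμc : ContinuousOn μ (Set.Icc N₁ N₂))
    (hεpos : ∀ x ∈ Set.Icc N₁ N₂, 0 < ε x)
    (hμpos : ∀ x ∈ Set.Icc N₁ N₂, 0 < μ x)
    (ω : ℂ) (hω : ω ≠ 0)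
    (ψ F : ℝ → ℂ)
    (hψ : ∀ x ∈ Set.Icc N₁ N₂, HasDerivAt ψ ((μ x : ℂ) * F x) x)
    (hF : ∀ x ∈ Set.Icc N₁ N₂, HasDerivAt F (-ω ^ 2 * (ε x : ℂ) * ψ x) x)
    (hbc₁ : F N₁ + Complex.I * ω * ψ N₁ = 0)
    (hbc₂ : F N₂ - Complex.I * ω * ψ N₂ = 0)
    (hnz : ∃ x ∈ Set.Icc N₁ N₂, ψ x ≠ 0) :
    ω.im < 0 := by
  by_contra! him
  obtain ⟨x₀, hx₀, hψx₀⟩ := hnz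
  have hψc : ContinuousOn ψ (Icc N₁ N₂) := fun x hx => (hψ x hx).continuousAt.continuousWithinAt
  have hE : 0 < ∫ x in N₁..N₂, ε x * normSq (ψ x) :=
    integral_pos hN (hεc.mul (continuous_normSq.comp_continuousOn hψc))
      (fun x hx => mul_nonneg (hεpos x (Ioc_subset_Icc_self hx)).le (normSq_nonneg _))
      ⟨x₀, hx₀, mul_pos (hεpos x₀ hx₀) (normSq_pos.mpr hψx₀)⟩
  have hM : 0 ≤ ∫ x in N₁..N₂, μ x * normSq (F x) :=
    integral_nonneg hN.le fun x hx => mul_nonneg (hμpos x hx).le (normSq_nonneg _)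
  have hboundary : conj (ψ N₂) * F N₂ - conj (ψ N₁) * F N₁ =
      I * ω * ↑(normSq (ψ N₁) + normSq (ψ N₂)) := by
    push_cast
    linear_combination conj (ψ N₂) * hbc₂ - conj (ψ N₁) * hbc₁
      + I * ω * (mul_conj (ψ N₂) + mul_conj (ψ N₁))
  have hB := eq_zero_of_I_mul_eq_sub_sq_mul hω him (add_nonneg (normSq_nonneg _) (normSq_nonneg _)) hM hE
    (hboundary ▸ conj_mul_sub_conj_mul_eq_integral hN.le hεc hμc hψ hF)
  have hψ₁ : ψ N₁ = 0 :=
    normSq_eq_zero.mp ((add_eq_zero_iff_of_nonneg (normSq_nonneg _) (normSq_nonneg _)).mp hB).1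
  have hF₁ : F N₁ = 0 := by simpa [hψ₁] using hbc₁
  exact hψx₀ (eq_zero_of_hasDerivAt_system_of_eq_zero_left
    (continuous_ofReal.comp_continuousOn hμc)
    (continuousOn_const.mul (continuous_ofReal.comp_continuousOn hεc)) hψ hF hψ₁ hF₁ x₀ hx₀)
end
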